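/- arXiv:2508.16913 — 15 statements merged into one kernel-verified Lean document; each statement's English description precedes it below -/
import Mathlib

section
/- Under the scalar sign dynamics, assume θ₀ ≠ θ*. Then there exists τ ≤ ⌈|θ₀ - θ*| / η₀⌉ such that sgn(θ(τ) - θ*) ≠ sgn(θ₀ - θ*); moreover, for every τ' strictly smaller than the least such τ, the error decreases linearly: |θ(τ') - θ*| = |θ₀ - θ*| - τ'·η₀. -/
open Classical in
/-- Under the scalar sign dynamics with `θ₀ ≠ θ*`, a sign change occurs within
`⌈|θ₀ - θ*|/η₀⌉` iterations, and before the first sign change the error decreases linearly. -/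
theorem first_sign_change_within_ceil
    (θs γ η0 θ0 : ℝ) (hγ0 : 0 < γ) (hγ1 : γ < 1) (hη0 : 0 < η0)
    (θ η s : ℕ → ℝ)
    (hθinit : θ 0 = θ0) (hηinit : η 0 = η0)
    (hs : ∀ τ, s τ = -Real.sign (θ τ - θs))
    (hθrec : ∀ τ, θ (τ + 1) = θ τ + s τ * η τ)
    (hηrec : ∀ τ, η (τ + 1) = if s (τ + 1) * s τ = -1 then γ * η τ else η τ)
    (hne : θ0 ≠ θs) :
    ∃ τ : ℕ, (τ : ℤ) ≤ ⌈|θ0 - θs| / η0⌉ ∧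
      Real.sign (θ τ - θs) ≠ Real.sign (θ0 - θs) ∧
      ∀ τ' : ℕ, τ' < τ →
        Real.sign (θ τ' - θs) = Real.sign (θ0 - θs) ∧
        |θ τ' - θs| = |θ0 - θs| - τ' * η0 := by
  set σ := Real.sign (θ0 - θs) with hσdef
  set D := |θ0 - θs| with hDdef
  have hD0 : 0 < D := abs_pos.mpr (sub_ne_zero.mpr hne)
  have hσ : σ = 1 ∨ σ = -1 := by
    rcases lt_trichotomy (θ0 - θs) 0 with h | h | h
    · right; exact Real.sign_of_neg h
    · exact absurd (sub_eq_zero.mp h) hne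
    · left; exact Real.sign_of_pos h
  have hσsq : σ * σ = 1 := by rcases hσ with h | h <;> rw [h] <;> ring
  have hσabs : |σ| = 1 := by rcases hσ with h | h <;> rw [h] <;> norm_num
  have key : ∀ τ : ℕ, (∀ i ≤ τ, Real.sign (θ i - θs) = σ) →
      η τ = η0 ∧ θ τ - θs = σ * (D - τ * η0) := by
    intro τ
    induction τ with
    | zero =>
      intro _
      refine ⟨hηinit, ?_⟩
      have hbase : θ0 - θs = σ * D := by
        rcases lt_trichotomy (θ0 - θs) 0 with h | h | h
        · rw [hσdef, Real.sign_of_neg h, hDdef, abs_of_neg h]; ring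
        · exact absurd (sub_eq_zero.mp h) hne
        · rw [hσdef, Real.sign_of_pos h, hDdef, abs_of_pos h]; ring
      rw [hθinit, hbase]
      push_cast
      ring
    | succ n ih =>
      intro h
      have hn := ih (fun i hi => h i (hi.trans (Nat.le_succ n)))
      have hsn : s n = -σ := by rw [hs n, h n (Nat.le_succ n)]
      have hsn1 : s (n + 1) = -σ := by rw [hs (n + 1), h (n + 1) le_rfl]
      have hηn1 : η (n + 1) = η0 := by
        rw [hηrec n, hsn, hsn1]
        have : -σ * -σ = 1 := by rw [neg_mul_neg]; exact hσsq
        rw [this]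
        simp [hn.1]
        norm_num
      refine ⟨hηn1, ?_⟩
      have := hθrec n
      push_cast
      rw [hθrec n, hsn, hn.1]
      have h2 := hn.2
      have : θ n = θs + σ * (D - n * η0) := by linarith
      rw [this]; ring
  have pos : ∀ τ : ℕ, (∀ i ≤ τ, Real.sign (θ i - θs) = σ) → 0 < D - τ * η0 := by
    intro τ h
    have hk := (key τ h).2
    by_contra hle
    push_neg at hle
    have hτσ := h τ le_rfl
    rcases hσ with h1 | h1
    · rw [h1] at hk
      have : θ τ - θs ≤ 0 := by nlinarith
      rcases lt_or_eq_of_le this with h2 | h2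
      · rw [Real.sign_of_neg h2, h1] at hτσ; norm_num at hτσ
      · rw [Real.sign_eq_zero_iff.mpr h2, h1] at hτσ; norm_num at hτσ
    · rw [h1] at hk
      have : 0 ≤ θ τ - θs := by nlinarith
      rcases lt_or_eq_of_le this with h2 | h2
      · rw [Real.sign_of_pos h2, h1] at hτσ; norm_num at hτσ
      · rw [Real.sign_eq_zero_iff.mpr h2.symm, h1] at hτσ; norm_num at hτσ
  have hceil_pos : 0 < ⌈D / η0⌉ := Int.ceil_pos.mpr (div_pos hD0 hη0)
  set N : ℕ := (⌈D / η0⌉).toNat with hNdef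
  have hNcast : (N : ℝ) = (⌈D / η0⌉ : ℤ) := by
    rw [hNdef]; exact_mod_cast Int.toNat_of_nonneg hceil_pos.le
  have hwit : ∃ m, m ≤ N ∧ Real.sign (θ m - θs) ≠ σ := by
    by_contra hall
    push_neg at hall
    have := pos N (fun i hi => hall i hi)
    have hge : D / η0 ≤ (N : ℝ) := by
      rw [hNcast]; exact Int.le_ceil _
    have : (N : ℝ) < D / η0 := by
      rw [lt_div_iff₀ hη0]; linarith
    linarith
  obtain ⟨m, hmN, hmP⟩ := hwit
  have hex : ∃ τ : ℕ, Real.sign (θ τ - θs) ≠ σ := ⟨m, hmP⟩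
  refine ⟨Nat.find hex, ?_, Nat.find_spec hex, ?_⟩
  · have hle : Nat.find hex ≤ N := le_trans (Nat.find_min' hex hmP) hmN
    calc ((Nat.find hex : ℕ) : ℤ) ≤ (N : ℤ) := by exact_mod_cast hle
      _ = ⌈D / η0⌉ := by rw [hNdef]; exact Int.toNat_of_nonneg hceil_pos.le
  · intro τ' hτ'
    have hsame : ∀ i ≤ τ', Real.sign (θ i - θs) = σ := by
      intro i hi
      have := Nat.find_min hex (lt_of_le_of_lt hi hτ')
      push_neg at this
      exact this
    refine ⟨hsame τ' le_rfl, ?_⟩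
    have hk := (key τ' hsame).2
    have hp := pos τ' hsame
    rw [hk, abs_mul, hσabs, one_mul, abs_of_pos hp]
end

section
/- Under the scalar sign dynamics, suppose the μ-th flip occurs at iteration τ_μ (μ ≥ 1). Then the error immediately after the flip satisfies the strict bound |θ(τ_μ) - θ*| < γ^{μ-1} · η₀, and the error immediately before the flip satisfies |θ(τ_μ - 1) - θ*| ≤ γ^{μ-1} · η₀. -/
lemma sign_eq_one_pos {a : ℝ} (h : Real.sign a = 1) : 0 < a := by
  rcases lt_trichotomy a 0 with hn | rfl | hp
  · rw [Real.sign_of_neg hn] at h; norm_num at h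
  · simp at h
  · exact hp

lemma sign_eq_negone_neg {a : ℝ} (h : Real.sign a = -1) : a < 0 := by
  rcases lt_trichotomy a 0 with hn | rfl | hp
  · exact hn
  · simp at h
  · rw [Real.sign_of_pos hp] at h; norm_num at h

open Classical in
/-- If the μ-th flip occurs at iteration `τμ` (μ ≥ 1), then
`|θ(τμ) - θ*| < γ^{μ-1}·η₀` and `|θ(τμ - 1) - θ*| ≤ γ^{μ-1}·η₀`. -/
theorem error_bound_at_flip
    (θs γ η0 θ0 : ℝ) (hγ0 : 0 < γ) (hγ1 : γ < 1) (hη0 : 0 < η0)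
    (θ η s : ℕ → ℝ)
    (hθinit : θ 0 = θ0) (hηinit : η 0 = η0)
    (hs : ∀ τ, s τ = -Real.sign (θ τ - θs))
    (hθrec : ∀ τ, θ (τ + 1) = θ τ + s τ * η τ)
    (hηrec : ∀ τ, η (τ + 1) = if s (τ + 1) * s τ = -1 then γ * η τ else η τ)
    (μ τμ : ℕ) (hμ : 1 ≤ μ) (hτμ : 1 ≤ τμ)
    (hflip : s τμ * s (τμ - 1) = -1)
    (hcount : ((Finset.Icc 1 τμ).filter (fun k => s k * s (k - 1) = -1)).card = μ) :
    |θ τμ - θs| < γ ^ (μ - 1) * η0 ∧ |θ (τμ - 1) - θs| ≤ γ ^ (μ - 1) * η0 := by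
  have hins : ∀ n : ℕ, Finset.Icc 1 (n + 1) = insert (n + 1) (Finset.Icc 1 n) := by
    intro n; ext x; simp [Finset.mem_Icc, Finset.mem_insert]; omega
  have heta : ∀ τ, η τ =
      γ ^ ((Finset.Icc 1 τ).filter (fun k => s k * s (k - 1) = -1)).card * η0 := by
    intro τ
    induction τ with
    | zero => simp [hηinit]
    | succ n ih =>
      rw [hηrec n, ih, hins n, Finset.filter_insert]
      by_cases h : s (n + 1) * s n = -1
      · have h' : s (n + 1) * s ((n + 1) - 1) = -1 := by simpa using h
        rw [if_pos h, if_pos h', Finset.card_insert_of_notMem (by simp), pow_succ]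
        ring
      · have h' : ¬ s (n + 1) * s ((n + 1) - 1) = -1 := by simpa using h
        rw [if_neg h, if_neg h']
  obtain ⟨t, rfl⟩ : ∃ t, τμ = t + 1 := ⟨τμ - 1, by omega⟩
  have ht1 : (t + 1) - 1 = t := rfl
  rw [ht1] at hflip ⊢
  -- card of flips up to t is μ - 1
  have hcard : ((Finset.Icc 1 t).filter (fun k => s k * s (k - 1) = -1)).card = μ - 1 := by
    rw [hins t, Finset.filter_insert, if_pos (by simpa using hflip),
      Finset.card_insert_of_notMem (by simp)] at hcount
    omega
  have hηt : η t = γ ^ (μ - 1) * η0 := by rw [heta t, hcard]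
  -- sign analysis
  have hst : s t = -Real.sign (θ t - θs) := hs t
  have hst1 : s (t + 1) = -Real.sign (θ (t + 1) - θs) := hs (t + 1)
  have hprod : Real.sign (θ (t + 1) - θs) * Real.sign (θ t - θs) = -1 := by
    rw [hst, hst1] at hflip; linarith [hflip]
  have hrec : θ (t + 1) = θ t - Real.sign (θ t - θs) * η t := by
    rw [hθrec t, hst]; ring
  rcases Real.sign_apply_eq (θ (t + 1) - θs) with ha | ha | ha <;>
    rcases Real.sign_apply_eq (θ t - θs) with hb | hb | hb <;>
      rw [ha, hb] at hprod <;> try norm_num at hprod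
  · -- sign a = -1, sign b = 1 : θ t > θs, θ (t+1) < θs
    have hbpos := sign_eq_one_pos hb
    have haneg := sign_eq_negone_neg ha
    rw [hb, one_mul] at hrec
    rw [hηt] at hrec
    constructor
    · rw [abs_lt]; constructor <;> linarith
    · rw [abs_le]; constructor <;> [linarith; linarith]
  · -- sign a = 1, sign b = -1
    have hbneg := sign_eq_negone_neg hb
    have hapos := sign_eq_one_pos ha
    rw [hb] at hrec
    rw [hηt] at hrec
    constructor
    · rw [abs_lt]; constructor <;> linarith
    · rw [abs_le]; constructor <;> [linarith; linarith]
end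

section
/- Under the scalar sign dynamics, suppose the μ-th and (μ+1)-th flips occur at iterations τ_μ < τ_{μ+1}. Then the error magnitude |θ(τ) - θ*| is nonincreasing on the interval τ_μ ≤ τ < τ_{μ+1}; in particular |θ(τ) - θ*| ≤ |θ(τ_μ) - θ*| for all τ with τ_μ ≤ τ < τ_{μ+1}. -/
open Classical in
/-- Between consecutive flips `τμ < τμ'`, the error magnitude `|θ(τ) - θ*|`
is nonincreasing; in particular `|θ(τ) - θ*| ≤ |θ(τμ) - θ*|` for `τμ ≤ τ < τμ'`. -/
theorem error_nonincreasing_between_flips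
    (θs γ η0 θ0 : ℝ) (hγ0 : 0 < γ) (hγ1 : γ < 1) (hη0 : 0 < η0)
    (θ η s : ℕ → ℝ)
    (hθinit : θ 0 = θ0) (hηinit : η 0 = η0)
    (hs : ∀ τ, s τ = -Real.sign (θ τ - θs))
    (hθrec : ∀ τ, θ (τ + 1) = θ τ + s τ * η τ)
    (hηrec : ∀ τ, η (τ + 1) = if s (τ + 1) * s τ = -1 then γ * η τ else η τ)
    (μ τμ τμ' : ℕ) (hμ : 1 ≤ μ) (hτμ : 1 ≤ τμ) (hlt : τμ < τμ')
    (hflip : s τμ * s (τμ - 1) = -1)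
    (hcount : ((Finset.Icc 1 τμ).filter (fun k => s k * s (k - 1) = -1)).card = μ)
    (hflip' : s τμ' * s (τμ' - 1) = -1)
    (hcount' : ((Finset.Icc 1 τμ').filter (fun k => s k * s (k - 1) = -1)).card = μ + 1) :
    (∀ τ : ℕ, τμ ≤ τ → τ + 1 < τμ' → |θ (τ + 1) - θs| ≤ |θ τ - θs|) ∧
    (∀ τ : ℕ, τμ ≤ τ → τ < τμ' → |θ τ - θs| ≤ |θ τμ - θs|) := by
  -- learning rate stays positive
  have hηpos : ∀ τ, 0 < η τ := by
    intro τ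
    induction τ with
    | zero => rwa [hηinit]
    | succ n ih =>
      rw [hηrec]
      split
      · exact mul_pos hγ0 ih
      · exact ih
  -- no flips strictly between the two flips
  have hnoflip : ∀ k, τμ < k → k < τμ' → ¬ (s k * s (k - 1) = -1) := by
    intro k hk1 hk2 hP
    set A := (Finset.Icc 1 τμ).filter (fun k => s k * s (k - 1) = -1) with hA
    set B := (Finset.Icc 1 τμ').filter (fun k => s k * s (k - 1) = -1) with hB
    have hsub : A ⊆ B :=
      Finset.filter_subset_filter _ (Finset.Icc_subset_Icc_right hlt.le)
    have hkB : k ∈ B := by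
      simp only [hB, Finset.mem_filter, Finset.mem_Icc]
      exact ⟨⟨by omega, hk2.le⟩, hP⟩
    have hτB : τμ' ∈ B := by
      simp only [hB, Finset.mem_filter, Finset.mem_Icc]
      exact ⟨⟨by omega, le_refl _⟩, hflip'⟩
    have hkA : k ∉ A := by
      simp only [hA, Finset.mem_filter, Finset.mem_Icc]
      intro h; omega
    have hτA : τμ' ∉ A := by
      simp only [hA, Finset.mem_filter, Finset.mem_Icc]
      intro h; omega
    have hne : k ≠ τμ' := by omega
    have hins : insert k (insert τμ' A) ⊆ B := by
      intro x hx
      simp only [Finset.mem_insert] at hx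
      rcases hx with rfl | rfl | hx
      · exact hkB
      · exact hτB
      · exact hsub hx
    have hcard : (insert k (insert τμ' A)).card = μ + 2 := by
      rw [Finset.card_insert_of_notMem, Finset.card_insert_of_notMem hτA, hcount]
      simp [hne, hkA]
    have := Finset.card_le_card hins
    rw [hcard, hcount'] at this
    omega
  -- one-step nonincrease
  have step : ∀ τ : ℕ, τμ ≤ τ → τ + 1 < τμ' → |θ (τ + 1) - θs| ≤ |θ τ - θs| := by
    intro τ h1 h2
    have hnf : ¬ (s (τ + 1) * s τ = -1) := by
      have := hnoflip (τ + 1) (by omega) h2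
      simpa using this
    rcases lt_trichotomy (θ τ - θs) 0 with hx | hx | hx
    · have hsτ : s τ = 1 := by rw [hs, Real.sign_of_neg hx]; ring
      have hθ1 : θ (τ + 1) - θs = (θ τ - θs) + η τ := by rw [hθrec, hsτ]; ring
      have hle : θ (τ + 1) - θs ≤ 0 := by
        by_contra h
        push_neg at h
        have hs1 : s (τ + 1) = -1 := by rw [hs, Real.sign_of_pos h]
        exact hnf (by rw [hs1, hsτ]; ring)
      rw [abs_of_nonpos hle, abs_of_neg hx, hθ1]
      have := (hηpos τ).le
      linarith
    · have hsτ : s τ = 0 := by rw [hs, hx, Real.sign_zero]; ring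
      have hθ1 : θ (τ + 1) = θ τ := by rw [hθrec, hsτ]; ring
      rw [hθ1]
    · have hsτ : s τ = -1 := by rw [hs, Real.sign_of_pos hx]
      have hθ1 : θ (τ + 1) - θs = (θ τ - θs) - η τ := by rw [hθrec, hsτ]; ring
      have hle : 0 ≤ θ (τ + 1) - θs := by
        by_contra h
        push_neg at h
        have hs1 : s (τ + 1) = 1 := by rw [hs, Real.sign_of_neg h]; ring
        exact hnf (by rw [hs1, hsτ]; ring)
      rw [abs_of_nonneg hle, abs_of_pos hx, hθ1]
      have := (hηpos τ).le
      linarith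
  refine ⟨step, ?_⟩
  have key : ∀ d : ℕ, τμ + d < τμ' → |θ (τμ + d) - θs| ≤ |θ τμ - θs| := by
    intro d
    induction d with
    | zero => intro _; simp
    | succ n ih =>
      intro hd
      have h1 : τμ + n < τμ' := by omega
      have := step (τμ + n) (by omega) (by omega)
      calc |θ (τμ + (n + 1)) - θs| = |θ (τμ + n + 1) - θs| := by ring_nf
      _ ≤ |θ (τμ + n) - θs| := this
      _ ≤ |θ τμ - θs| := ih h1
  intro τ h1 h2
  have : τ = τμ + (τ - τμ) := by omega
  rw [this]
  exact key (τ - τμ) (by omega)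
end

section
/- Under the scalar sign dynamics, assume θ(τ) ≠ θ* for all τ ≥ 0 and let the first flip occur at iteration τ₁. Then for every τ ≥ τ₁, the number N(τ) of flip iterations in {1, …, τ} satisfies N(τ) ≥ 1 + ⌊(τ - τ₁) / C⌋, where C = ⌈γ⁻¹⌉. -/
/-!
Write `e τ = θ τ - θ*`. One step gives `e (τ+1) = sgn (e τ) · (|e τ| - η τ)`, so the sign flips
at `τ + 1` exactly when `|e τ| < η τ`, and otherwise `|e|` decreases by the current step size.
Right after a flip at `t + 1` we have `|e (t+1)| < η t = γ⁻¹ η (t+1) ≤ C η (t+1)`, and since `η`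
is constant between flips, `C` more flip-free steps would drive `|e|` to a non-positive value.
Hence consecutive flips are at most `C` iterations apart.
-/

open Finset

namespace Real

theorem sign_eq_neg_one_iff {y : ℝ} : sign y = -1 ↔ y < 0 := by
  refine ⟨fun h => ?_, sign_of_neg⟩
  by_contra! hy
  rcases hy.lt_or_eq with hy | rfl
  · rw [sign_of_pos hy] at h; norm_num at h
  · rw [sign_zero] at h; norm_num at h

theorem sign_sub_sign_mul_mul_sign {x : ℝ} (hx : x ≠ 0) (h : ℝ) :
    sign (x - sign x * h) * sign x = sign (|x| - h) := by
  rcases hx.lt_or_gt with hx | hx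
  · rw [sign_of_neg hx, abs_of_neg hx, show -x - h = -(x - -1 * h) by ring, sign_neg,
      mul_neg_one]
  · rw [sign_of_pos hx, abs_of_pos hx, one_mul, mul_one]

theorem abs_sub_sign_mul {x : ℝ} (hx : x ≠ 0) (h : ℝ) : |x - sign x * h| = |(|x| - h)| := by
  rcases hx.lt_or_gt with hx | hx
  · rw [sign_of_neg hx, abs_of_neg hx, show -x - h = -(x - -1 * h) by ring, abs_neg]
  · rw [sign_of_pos hx, abs_of_pos hx, one_mul]

end Real

section FlipCounting

variable {P : ℕ → Prop} [DecidablePred P] {a C : ℕ}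

theorem exists_le_card_filter_Icc_of_gap
    (hgap : ∀ t, a ≤ t → P t → ∃ t', t < t' ∧ t' ≤ t + C ∧ P t') (ha : P a) (j : ℕ) :
    ∃ t, a ≤ t ∧ t ≤ a + j * C ∧ P t ∧ j + 1 ≤ #{k ∈ Icc a t | P k} := by
  induction j with
  | zero => exact ⟨a, le_rfl, by simp, ha, card_pos.mpr ⟨a, by simp [ha]⟩⟩
  | succ j ih =>
    obtain ⟨t, hat, htj, hPt, hcard⟩ := ih
    obtain ⟨t', htt', ht'C, hPt'⟩ := hgap t hat hPt
    refine ⟨t', by omega, by rw [add_mul]; omega, hPt', ?_⟩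
    have hsub : insert t' {k ∈ Icc a t | P k} ⊆ {k ∈ Icc a t' | P k} :=
      insert_subset (mem_filter.mpr ⟨mem_Icc.mpr ⟨by omega, le_rfl⟩, hPt'⟩)
        (filter_subset_filter _ (Icc_subset_Icc_right htt'.le))
    have hnotMem : t' ∉ {k ∈ Icc a t | P k} := by simp only [mem_filter, mem_Icc]; omega
    have hle := card_le_card hsub
    rw [card_insert_of_notMem hnotMem] at hle
    omega

theorem div_add_one_le_card_filter_Icc_of_gap
    (hgap : ∀ t, a ≤ t → P t → ∃ t', t < t' ∧ t' ≤ t + C ∧ P t') (ha : P a) (n : ℕ) :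
    n / C + 1 ≤ #{k ∈ Icc a (a + n) | P k} := by
  obtain ⟨t, -, ht, -, hcard⟩ := exists_le_card_filter_Icc_of_gap hgap ha (n / C)
  have htn : t ≤ a + n := ht.trans (by have := Nat.div_mul_le_self n C; omega)
  exact hcard.trans (card_le_card (filter_subset_filter _ (Icc_subset_Icc_right htn)))

end FlipCounting

section SignDynamics

variable {θs γ : ℝ} {θ η s : ℕ → ℝ}

theorem error_succ (hs : ∀ τ, s τ = -Real.sign (θ τ - θs))
    (hθrec : ∀ τ, θ (τ + 1) = θ τ + s τ * η τ) (τ : ℕ) :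
    θ (τ + 1) - θs = θ τ - θs - Real.sign (θ τ - θs) * η τ := by
  rw [hθrec, hs]
  ring

theorem flip_iff_abs_error_lt (hs : ∀ τ, s τ = -Real.sign (θ τ - θs))
    (hθrec : ∀ τ, θ (τ + 1) = θ τ + s τ * η τ) (hne : ∀ τ : ℕ, θ τ ≠ θs) (τ : ℕ) :
    s (τ + 1) * s τ = -1 ↔ |θ τ - θs| < η τ := by
  rw [hs, hs, neg_mul_neg, error_succ hs hθrec,
    Real.sign_sub_sign_mul_mul_sign (sub_ne_zero.mpr (hne τ)), Real.sign_eq_neg_one_iff, sub_neg]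

theorem abs_error_succ (hs : ∀ τ, s τ = -Real.sign (θ τ - θs))
    (hθrec : ∀ τ, θ (τ + 1) = θ τ + s τ * η τ) (hne : ∀ τ : ℕ, θ τ ≠ θs) (τ : ℕ) :
    |θ (τ + 1) - θs| = |(|θ τ - θs| - η τ)| := by
  rw [error_succ hs hθrec, Real.abs_sub_sign_mul (sub_ne_zero.mpr (hne τ))]

theorem abs_error_add_of_no_flip (hs : ∀ τ, s τ = -Real.sign (θ τ - θs))
    (hθrec : ∀ τ, θ (τ + 1) = θ τ + s τ * η τ)
    (hηrec : ∀ τ, η (τ + 1) = if s (τ + 1) * s τ = -1 then γ * η τ else η τ)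
    (hne : ∀ τ : ℕ, θ τ ≠ θs) {t k : ℕ}
    (hno : ∀ j, t < j → j ≤ t + k → s j * s (j - 1) ≠ -1) :
    |θ (t + k) - θs| = |θ t - θs| - k * η t ∧ η (t + k) = η t := by
  induction k with
  | zero => simp
  | succ k ih =>
    obtain ⟨habs, hη⟩ := ih fun j htj hjk => hno j htj (by omega)
    have hnoflip : ¬ s (t + k + 1) * s (t + k) = -1 := by
      simpa using hno (t + k + 1) (by omega) le_rfl
    have hstep := (flip_iff_abs_error_lt hs hθrec hne (t + k)).not.mp hnoflip
    rw [hη, not_lt] at hstep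
    rw [← add_assoc, abs_error_succ hs hθrec hne, hηrec, if_neg hnoflip, hη,
      abs_of_nonneg (sub_nonneg.mpr hstep), habs]
    exact ⟨by push_cast; ring, rfl⟩

theorem exists_flip_of_abs_error_le (hs : ∀ τ, s τ = -Real.sign (θ τ - θs))
    (hθrec : ∀ τ, θ (τ + 1) = θ τ + s τ * η τ)
    (hηrec : ∀ τ, η (τ + 1) = if s (τ + 1) * s τ = -1 then γ * η τ else η τ)
    (hne : ∀ τ : ℕ, θ τ ≠ θs) {t k : ℕ} (hle : |θ t - θs| ≤ k * η t) :
    ∃ j, t < j ∧ j ≤ t + k ∧ s j * s (j - 1) = -1 := by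
  by_contra! hno
  have hpos := abs_pos.mpr (sub_ne_zero.mpr (hne (t + k)))
  rw [(abs_error_add_of_no_flip hs hθrec hηrec hne hno).1] at hpos
  linarith

theorem exists_flip_within_ceil_inv (hγ : 0 < γ) (hs : ∀ τ, s τ = -Real.sign (θ τ - θs))
    (hθrec : ∀ τ, θ (τ + 1) = θ τ + s τ * η τ)
    (hηrec : ∀ τ, η (τ + 1) = if s (τ + 1) * s τ = -1 then γ * η τ else η τ)
    (hne : ∀ τ : ℕ, θ τ ≠ θs) {k : ℕ} (hk : 1 ≤ k) (hflip : s k * s (k - 1) = -1) :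
    ∃ j, k < j ∧ j ≤ k + ⌈γ⁻¹⌉₊ ∧ s j * s (j - 1) = -1 := by
  obtain ⟨t, rfl⟩ : ∃ t, k = t + 1 := ⟨k - 1, by omega⟩
  rw [Nat.add_sub_cancel] at hflip
  have hlt : |θ t - θs| < η t := (flip_iff_abs_error_lt hs hθrec hne t).mp hflip
  have hη : η (t + 1) = γ * η t := by rw [hηrec, if_pos hflip]
  have hηpos : 0 < η t := (abs_nonneg _).trans_lt hlt
  refine exists_flip_of_abs_error_le hs hθrec hηrec hne ?_
  calc |θ (t + 1) - θs| = η t - |θ t - θs| := by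
        rw [abs_error_succ hs hθrec hne, abs_sub_comm, abs_of_pos (sub_pos.mpr hlt)]
    _ ≤ η t := sub_le_self _ (abs_nonneg _)
    _ = γ⁻¹ * η (t + 1) := by rw [hη, inv_mul_cancel_left₀ hγ.ne']
    _ ≤ ⌈γ⁻¹⌉₊ * η (t + 1) := by
        gcongr
        · rw [hη]; positivity
        · exact Nat.le_ceil _

end SignDynamics

open Classical in
theorem flip_count_lower_bound_general
    (θs γ : ℝ) (hγ0 : 0 < γ)
    (θ η s : ℕ → ℝ)
    (hs : ∀ τ, s τ = -Real.sign (θ τ - θs))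
    (hθrec : ∀ τ, θ (τ + 1) = θ τ + s τ * η τ)
    (hηrec : ∀ τ, η (τ + 1) = if s (τ + 1) * s τ = -1 then γ * η τ else η τ)
    (hne : ∀ τ : ℕ, θ τ ≠ θs)
    (τ₁ : ℕ) (hτ₁ : 1 ≤ τ₁)
    (hflip : s τ₁ * s (τ₁ - 1) = -1) :
    ∀ τ : ℕ, τ₁ ≤ τ →
      1 + ((τ : ℤ) - (τ₁ : ℤ)) / ⌈γ⁻¹⌉ ≤
        (((Finset.Icc 1 τ).filter (fun k => s k * s (k - 1) = -1)).card : ℤ) := by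
  intro τ hτ
  have hcount := div_add_one_le_card_filter_Icc_of_gap
    (fun t ht => exists_flip_within_ceil_inv hγ0 hs hθrec hηrec hne (hτ₁.trans ht)) hflip (τ - τ₁)
  rw [Nat.add_sub_cancel' hτ] at hcount
  have hcast : ((τ : ℤ) - τ₁) / ⌈γ⁻¹⌉ = ((τ - τ₁) / ⌈γ⁻¹⌉₊ : ℕ) := by
    rw [← Int.natCast_ceil_eq_ceil (inv_nonneg.mpr hγ0.le), Int.natCast_ediv, Nat.cast_sub hτ]
  rw [hcast, add_comm]
  exact_mod_cast hcount.trans (card_le_card (filter_subset_filter _ (Icc_subset_Icc_left hτ₁)))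

open Classical in
/-- If `θ(τ) ≠ θ*` for all τ and the first flip occurs at `τ₁`, then for all
`τ ≥ τ₁` the number `N(τ)` of flips in `{1,…,τ}` satisfies `N(τ) ≥ 1 + ⌊(τ - τ₁)/C⌋`
with `C = ⌈γ⁻¹⌉`. -/
theorem flip_count_lower_bound
    (θs γ η0 θ0 : ℝ) (hγ0 : 0 < γ) (hγ1 : γ < 1) (hη0 : 0 < η0)
    (θ η s : ℕ → ℝ)
    (hθinit : θ 0 = θ0) (hηinit : η 0 = η0)
    (hs : ∀ τ, s τ = -Real.sign (θ τ - θs))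
    (hθrec : ∀ τ, θ (τ + 1) = θ τ + s τ * η τ)
    (hηrec : ∀ τ, η (τ + 1) = if s (τ + 1) * s τ = -1 then γ * η τ else η τ)
    (hne : ∀ τ : ℕ, θ τ ≠ θs)
    (τ₁ : ℕ) (hτ₁ : 1 ≤ τ₁)
    (hflip : s τ₁ * s (τ₁ - 1) = -1)
    (hfirst : ∀ k : ℕ, 1 ≤ k → k < τ₁ → s k * s (k - 1) ≠ -1) :
    ∀ τ : ℕ, τ₁ ≤ τ →
      1 + ((τ : ℤ) - (τ₁ : ℤ)) / ⌈γ⁻¹⌉ ≤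
        (((Finset.Icc 1 τ).filter (fun k => s k * s (k - 1) = -1)).card : ℤ) :=
  flip_count_lower_bound_general θs γ hγ0 θ η s hs hθrec hηrec hne τ₁ hτ₁ hflip
end

section
/- Under the scalar sign dynamics, suppose at least one flip occurs and let τ₁ be the first flip iteration. Then for every τ ≥ τ₁, the error satisfies |θ(τ) - θ*| < γ^{N(τ)-1} · η₀, where N(τ) ≥ 1 is the number of flip iterations in {1, …, τ}. -/
open Classical in
/-- If the first flip occurs at `τ₁`, then for all `τ ≥ τ₁`,
`|θ(τ) - θ*| < γ^{N(τ)-1}·η₀` where `N(τ) ≥ 1` is the number of flips in `{1,…,τ}`. -/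
theorem error_bound_by_flip_count
    (θs γ η0 θ0 : ℝ) (hγ0 : 0 < γ) (hγ1 : γ < 1) (hη0 : 0 < η0)
    (θ η s : ℕ → ℝ)
    (hθinit : θ 0 = θ0) (hηinit : η 0 = η0)
    (hs : ∀ τ, s τ = -Real.sign (θ τ - θs))
    (hθrec : ∀ τ, θ (τ + 1) = θ τ + s τ * η τ)
    (hηrec : ∀ τ, η (τ + 1) = if s (τ + 1) * s τ = -1 then γ * η τ else η τ)
    (τ₁ : ℕ) (hτ₁ : 1 ≤ τ₁)
    (hflip : s τ₁ * s (τ₁ - 1) = -1)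
    (hfirst : ∀ k : ℕ, 1 ≤ k → k < τ₁ → s k * s (k - 1) ≠ -1) :
    ∀ τ : ℕ, τ₁ ≤ τ →
      1 ≤ ((Finset.Icc 1 τ).filter (fun k => s k * s (k - 1) = -1)).card ∧
      |θ τ - θs| <
        γ ^ (((Finset.Icc 1 τ).filter (fun k => s k * s (k - 1) = -1)).card - 1) * η0 := by
  have hγne : γ ≠ 0 := ne_of_gt hγ0
  have hηpos : ∀ τ, 0 < η τ := by
    intro τ
    induction τ with
    | zero => rw [hηinit]; exact hη0
    | succ n ih =>
      rw [hηrec n]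
      split
      · positivity
      · exact ih
  -- sign values
  have hs_neg : ∀ τ, θ τ - θs < 0 → s τ = 1 := by
    intro τ h; rw [hs τ, Real.sign_of_neg h]; ring
  have hs_pos : ∀ τ, 0 < θ τ - θs → s τ = -1 := by
    intro τ h; rw [hs τ, Real.sign_of_pos h]
  have hs_zero : ∀ τ, θ τ - θs = 0 → s τ = 0 := by
    intro τ h; rw [hs τ, h, Real.sign_zero]; ring
  -- flip lemma
  have hflipLem : ∀ τ, s (τ + 1) * s τ = -1 → |θ (τ + 1) - θs| < η τ := by
    intro τ hf
    have hθ := hθrec τ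
    rcases lt_trichotomy (θ τ - θs) 0 with h | h | h
    · have hsτ : s τ = 1 := hs_neg τ h
      rcases lt_trichotomy (θ (τ + 1) - θs) 0 with h1 | h1 | h1
      · rw [hs_neg (τ + 1) h1, hsτ] at hf; norm_num at hf
      · rw [hs_zero (τ + 1) h1] at hf; norm_num at hf
      · rw [abs_of_pos h1]
        have : θ (τ + 1) = θ τ + η τ := by rw [hθ, hsτ]; ring
        linarith
    · rw [hs_zero τ h] at hf; norm_num at hf
    · have hsτ : s τ = -1 := hs_pos τ h
      rcases lt_trichotomy (θ (τ + 1) - θs) 0 with h1 | h1 | h1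
      · rw [abs_of_neg h1]
        have : θ (τ + 1) = θ τ - η τ := by rw [hθ, hsτ]; ring
        linarith
      · rw [hs_zero (τ + 1) h1] at hf; norm_num at hf
      · rw [hs_pos (τ + 1) h1, hsτ] at hf; norm_num at hf
  -- non-flip step lemma
  have hstep : ∀ τ, s (τ + 1) * s τ ≠ -1 → |θ τ - θs| < η τ / γ →
      |θ (τ + 1) - θs| < η τ / γ := by
    intro τ hf ih
    have hθ := hθrec τ
    have hηγ : 0 < η τ / γ := div_pos (hηpos τ) hγ0
    rcases lt_trichotomy (θ τ - θs) 0 with h | h | h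
    · have hsτ : s τ = 1 := hs_neg τ h
      have hθ' : θ (τ + 1) = θ τ + η τ := by rw [hθ, hsτ]; ring
      rcases lt_trichotomy (θ (τ + 1) - θs) 0 with h1 | h1 | h1
      · rw [abs_of_neg h1]
        rw [abs_of_neg h] at ih
        have := hηpos τ
        linarith
      · rw [h1]; simpa using hηγ
      · exfalso; apply hf; rw [hs_pos (τ + 1) h1, hsτ]; ring
    · have hsτ : s τ = 0 := hs_zero τ h
      have hθ' : θ (τ + 1) = θ τ := by rw [hθ, hsτ]; ring
      rw [hθ', h]; simpa using hηγ
    · have hsτ : s τ = -1 := hs_pos τ h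
      have hθ' : θ (τ + 1) = θ τ - η τ := by rw [hθ, hsτ]; ring
      rcases lt_trichotomy (θ (τ + 1) - θs) 0 with h1 | h1 | h1
      · exfalso; apply hf; rw [hs_neg (τ + 1) h1, hsτ]; ring
      · rw [h1]; simpa using hηγ
      · rw [abs_of_pos h1]
        rw [abs_of_pos h] at ih
        have := hηpos τ
        linarith
  have hpred : τ₁ - 1 + 1 = τ₁ := Nat.succ_pred_eq_of_pos hτ₁
  -- invariant
  have hinv : ∀ τ, τ₁ ≤ τ → |θ τ - θs| < η τ / γ := by
    intro τ hτ
    induction τ, hτ using Nat.le_induction with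
    | base =>
      have h1 : |θ τ₁ - θs| < η (τ₁ - 1) := by
        have := hflipLem (τ₁ - 1) (by rw [hpred]; exact hflip)
        rwa [hpred] at this
      have h2 : η τ₁ = γ * η (τ₁ - 1) := by
        have := hηrec (τ₁ - 1)
        rw [hpred] at this
        rw [this, if_pos hflip]
      rw [h2, mul_div_cancel_left₀ _ hγne]
      exact h1
    | succ n hn ih =>
      by_cases hf : s (n + 1) * s n = -1
      · have h2 : η (n + 1) = γ * η n := by rw [hηrec n, if_pos hf]
        rw [h2, mul_div_cancel_left₀ _ hγne]
        exact hflipLem n hf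
      · have h2 : η (n + 1) = η n := by rw [hηrec n, if_neg hf]
        rw [h2]
        exact hstep n hf ih
  -- η in terms of flip count
  have hηN : ∀ τ, η τ =
      γ ^ ((Finset.Icc 1 τ).filter (fun k => s k * s (k - 1) = -1)).card * η0 := by
    intro τ
    induction τ with
    | zero => simp [hηinit]
    | succ n ih =>
      have hIcc : Finset.Icc 1 (n + 1) = insert (n + 1) (Finset.Icc 1 n) := by
        ext x
        simp only [Finset.mem_Icc, Finset.mem_insert]
        omega
      have hnot : n + 1 ∉ Finset.Icc 1 n := by simp
      rw [hηrec n, ih, hIcc, Finset.filter_insert]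
      by_cases hf : s (n + 1) * s (n + 1 - 1) = -1
      · have hf' : s (n + 1) * s n = -1 := by simpa using hf
        rw [if_pos hf', if_pos hf, Finset.card_insert_of_notMem (fun h => hnot (Finset.mem_of_mem_filter _ h))]
        rw [pow_succ]; ring
      · have hf' : ¬ s (n + 1) * s n = -1 := by simpa using hf
        rw [if_neg hf', if_neg hf]
  -- conclude
  intro τ hτ
  have hmem : τ₁ ∈ (Finset.Icc 1 τ).filter (fun k => s k * s (k - 1) = -1) := by
    simp only [Finset.mem_filter, Finset.mem_Icc]
    exact ⟨⟨hτ₁, hτ⟩, hflip⟩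
  have hN1 : 1 ≤ ((Finset.Icc 1 τ).filter (fun k => s k * s (k - 1) = -1)).card :=
    Finset.card_pos.mpr ⟨τ₁, hmem⟩
  refine ⟨hN1, ?_⟩
  have hmain := hinv τ hτ
  rw [hηN τ] at hmain
  set N := ((Finset.Icc 1 τ).filter (fun k => s k * s (k - 1) = -1)).card with hN
  have hpow : γ ^ N = γ ^ (N - 1) * γ := by
    rw [← pow_succ]; congr 1; omega
  calc |θ τ - θs| < γ ^ N * η0 / γ := hmain
    _ = γ ^ (N - 1) * η0 := by rw [hpow]; field_simp
end

section
/- Under the scalar sign dynamics, the error is uniformly bounded: for all τ ≥ 0, |θ(τ) - θ*| ≤ max(|θ₀ - θ*|, η₀). -/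
lemma sign_step_bound (e h : ℝ) (hh : 0 < h) :
    |e - Real.sign e * h| ≤ max |e| h := by
  rcases lt_trichotomy e 0 with he | he | he
  · rw [Real.sign_of_neg he]
    rw [abs_of_neg he]
    rw [abs_le]
    constructor
    · have : -e ≤ max (-e) h := le_max_left _ _
      linarith
    · have : h ≤ max (-e) h := le_max_right _ _
      linarith
  · simp [he, Real.sign_zero]
  · rw [Real.sign_of_pos he]
    rw [abs_of_pos he]
    rw [abs_le]
    constructor
    · have : h ≤ max e h := le_max_right _ _
      linarith
    · have : e ≤ max e h := le_max_left _ _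
      linarith

open Classical in
/-- Under the scalar sign dynamics, the error is uniformly bounded:
`|θ(τ) - θ*| ≤ max(|θ₀ - θ*|, η₀)` for all τ. -/
theorem error_uniformly_bounded
    (θs γ η0 θ0 : ℝ) (hγ0 : 0 < γ) (hγ1 : γ < 1) (hη0 : 0 < η0)
    (θ η s : ℕ → ℝ)
    (hθinit : θ 0 = θ0) (hηinit : η 0 = η0)
    (hs : ∀ τ, s τ = -Real.sign (θ τ - θs))
    (hθrec : ∀ τ, θ (τ + 1) = θ τ + s τ * η τ)
    (hηrec : ∀ τ, η (τ + 1) = if s (τ + 1) * s τ = -1 then γ * η τ else η τ) :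
    ∀ τ : ℕ, |θ τ - θs| ≤ max |θ0 - θs| η0 := by
  have key : ∀ τ : ℕ, 0 < η τ ∧ η τ ≤ η0 ∧ |θ τ - θs| ≤ max |θ0 - θs| η0 := by
    intro τ
    induction τ with
    | zero =>
      refine ⟨by rw [hηinit]; exact hη0, le_of_eq hηinit, ?_⟩
      rw [hθinit]; exact le_max_left _ _
    | succ n ih =>
      obtain ⟨hpos, hle, hbd⟩ := ih
      have hηpos : 0 < η (n + 1) := by
        rw [hηrec]
        split
        · positivity
        · exact hpos
      refine ⟨hηpos, ?_, ?_⟩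
      · rw [hηrec]
        split
        · nlinarith
        · exact hle
      · have : θ (n + 1) - θs = (θ n - θs) - Real.sign (θ n - θs) * η n := by
          rw [hθrec, hs]; ring
        rw [this]
        calc |(θ n - θs) - Real.sign (θ n - θs) * η n| ≤ max |θ n - θs| (η n) :=
              sign_step_bound _ _ hpos
          _ ≤ max |θ0 - θs| η0 := by
              apply max_le hbd
              exact le_trans hle (le_max_right _ _)
  exact fun τ => (key τ).2.2
end

section
/- (Theorem 1, scalar case) Under the scalar sign dynamics, the parameter converges exponentially to θ*: there exists a constant α > 0 such that for all τ ≥ 0, |θ(τ) - θ*| ≤ α · γ^{τ/C}, where C = ⌈γ⁻¹⌉ and γ^{τ/C} denotes the real power of γ with exponent τ/C. -/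
/-!
In the error coordinate `e = θ - θ*` the iterate moves by `η` towards `0`, and `η` is multiplied
by `γ` exactly when `e` changes sign, i.e. when `0 < |e| < η`. While `η < γ|e|` the step size is
frozen and `|e|` drops by `η` per step, so eventually `γ|e| ≤ η`, and this invariant persists.
Under it, `C ≥ γ⁻¹` consecutive steps without a sign change would reduce `|e| ≤ Cη` to `0`, so
every block of `C` steps either lands exactly on `θ*` or shrinks `η` by `γ`. Hence the
nonincreasing potential `max (γ|e|) η` (taken to be `0` once `e = 0`, after which `η` no longer
shrinks) contracts by `γ` every `C` steps.
-/

theorem Antitone.le_pow_div_mul {u : ℕ → ℝ} (hu : Antitone u) {γ : ℝ} (hγ : 0 ≤ γ) {C T : ℕ}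
    (hstep : ∀ τ ≥ T, u (τ + C) ≤ γ * u τ) (τ : ℕ) : u τ ≤ γ ^ ((τ - T) / C) * u 0 := by
  have hgeom : ∀ n : ℕ, u (T + n * C) ≤ γ ^ n * u T := by
    intro n
    induction n with
    | zero => simp
    | succ n ih =>
      calc u (T + (n + 1) * C) = u (T + n * C + C) := by ring_nf
        _ ≤ γ * u (T + n * C) := hstep _ (Nat.le_add_right _ _)
        _ ≤ γ * (γ ^ n * u T) := mul_le_mul_of_nonneg_left ih hγ
        _ = γ ^ (n + 1) * u T := by ring
  rcases lt_or_ge τ T with hτ | hτ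
  · simpa [Nat.sub_eq_zero_of_le hτ.le] using hu (Nat.zero_le τ)
  · calc u τ ≤ u (T + (τ - T) / C * C) := hu (by have := Nat.div_mul_le_self (τ - T) C; omega)
      _ ≤ γ ^ ((τ - T) / C) * u T := hgeom _
      _ ≤ γ ^ ((τ - T) / C) * u 0 := mul_le_mul_of_nonneg_left (hu (Nat.zero_le T)) (by positivity)

theorem Antitone.exists_le_mul_rpow_div {u : ℕ → ℝ} (hu : Antitone u) {γ : ℝ} (hγ0 : 0 < γ)
    (hγ1 : γ ≤ 1) {C T : ℕ} (hC : 0 < C) (hstep : ∀ τ ≥ T, u (τ + C) ≤ γ * u τ) :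
    ∃ α > 0, ∀ τ : ℕ, u τ ≤ α * γ ^ ((τ : ℝ) / C) := by
  refine ⟨(|u 0| + 1) / γ ^ ((T : ℝ) / C + 1), by positivity, fun τ => ?_⟩
  set n := (τ - T) / C
  have hn : (τ : ℝ) / C - ((T : ℝ) / C + 1) ≤ n := by
    have h : τ < T + C * (n + 1) := by
      have : τ - T < C * (n + 1) := Nat.lt_mul_div_succ (τ - T) hC
      omega
    have h' : (τ : ℝ) < T + C * (n + 1) := by exact_mod_cast h
    have hC' : (0 : ℝ) < C := by exact_mod_cast hC
    rw [← sub_nonneg]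
    field_simp
    nlinarith
  calc u τ ≤ γ ^ n * u 0 := hu.le_pow_div_mul hγ0.le hstep τ
    _ ≤ γ ^ (n : ℝ) * (|u 0| + 1) := by
      rw [Real.rpow_natCast]
      exact mul_le_mul_of_nonneg_left (by linarith [le_abs_self (u 0)]) (by positivity)
    _ ≤ γ ^ ((τ : ℝ) / C - ((T : ℝ) / C + 1)) * (|u 0| + 1) :=
      mul_le_mul_of_nonneg_right (Real.rpow_le_rpow_of_exponent_ge hγ0 hγ1 hn) (by positivity)
    _ = (|u 0| + 1) / γ ^ ((T : ℝ) / C + 1) * γ ^ ((τ : ℝ) / C) := by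
      rw [Real.rpow_sub hγ0]; ring

theorem Real.sign_mul_self (x : ℝ) : Real.sign x * x = |x| := by
  rcases lt_trichotomy x 0 with hx | rfl | hx
  · rw [Real.sign_of_neg hx, abs_of_neg hx, neg_one_mul]
  · simp
  · rw [Real.sign_of_pos hx, abs_of_pos hx, one_mul]

theorem Real.sign_mul_sign_eq_neg_one_iff {x y : ℝ} : Real.sign x * Real.sign y = -1 ↔ x * y < 0 := by
  rw [mul_neg_iff]
  rcases lt_trichotomy x 0 with hx | hx | hx <;> rcases lt_trichotomy y 0 with hy | hy | hy <;>
    simp [Real.sign_of_neg, Real.sign_of_pos, hx, hy, not_lt_of_gt] <;> norm_num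

structure IsSignDescent (γ : ℝ) (e η : ℕ → ℝ) : Prop where
  error_succ : ∀ τ, e (τ + 1) = e τ - Real.sign (e τ) * η τ
  step_succ : ∀ τ, η (τ + 1) =
    if Real.sign (e (τ + 1)) * Real.sign (e τ) = -1 then γ * η τ else η τ

namespace IsSignDescent

variable {γ : ℝ} {e η : ℕ → ℝ}

theorem error_succ_eq_zero (h : IsSignDescent γ e η) {τ : ℕ} (hτ : e τ = 0) : e (τ + 1) = 0 := by
  rw [h.error_succ, hτ, Real.sign_zero, zero_mul, sub_zero]

theorem error_eq_zero_of_le (h : IsSignDescent γ e η) {τ τ' : ℕ} (hτ : e τ = 0) (hle : τ ≤ τ') :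
    e τ' = 0 := by
  induction τ', hle using Nat.le_induction with
  | base => exact hτ
  | succ n _ ih => exact h.error_succ_eq_zero ih

theorem abs_error_succ (h : IsSignDescent γ e η) {τ : ℕ} (hτ : e τ ≠ 0) :
    |e (τ + 1)| = |(|e τ| - η τ)| := by
  rw [h.error_succ]
  rcases hτ.lt_or_gt with hτ | hτ
  · rw [Real.sign_of_neg hτ, abs_of_neg hτ, ← abs_neg]
    ring_nf
  · rw [Real.sign_of_pos hτ, abs_of_pos hτ, one_mul]

theorem step_succ_eq (h : IsSignDescent γ e η) (τ : ℕ) :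
    η (τ + 1) = if e τ ≠ 0 ∧ |e τ| < η τ then γ * η τ else η τ := by
  have hprod : e (τ + 1) * e τ = |e τ| * (|e τ| - η τ) := by
    rw [h.error_succ, sub_mul, mul_assoc, mul_comm (η τ), ← mul_assoc, Real.sign_mul_self,
      ← abs_mul_abs_self]
    ring
  have hflip : e (τ + 1) * e τ < 0 ↔ e τ ≠ 0 ∧ |e τ| < η τ := by
    rw [hprod, mul_neg_iff, abs_pos, sub_neg, sub_pos]
    constructor
    · rintro (hflip | ⟨hneg, -⟩)
      · exact hflip
      · exact absurd hneg (abs_nonneg _).not_gt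
    · exact Or.inl
  rw [h.step_succ]
  exact if_congr (Real.sign_mul_sign_eq_neg_one_iff.trans hflip) rfl rfl

theorem step_succ_of_lt (h : IsSignDescent γ e η) {τ : ℕ} (hne : e τ ≠ 0) (hlt : |e τ| < η τ) :
    η (τ + 1) = γ * η τ := by
  rw [h.step_succ_eq, if_pos ⟨hne, hlt⟩]

theorem step_succ_of_le (h : IsSignDescent γ e η) {τ : ℕ} (hle : η τ ≤ |e τ|) :
    η (τ + 1) = η τ := by
  rw [h.step_succ_eq, if_neg fun hflip => hle.not_gt hflip.2]

theorem abs_error_succ_of_le (h : IsSignDescent γ e η) {τ : ℕ} (hη : 0 < η τ) (hle : η τ ≤ |e τ|) :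
    |e (τ + 1)| = |e τ| - η τ := by
  rw [h.abs_error_succ (abs_pos.1 (hη.trans_le hle)), abs_of_nonneg (sub_nonneg.2 hle)]

theorem step_pos (h : IsSignDescent γ e η) (hγ : 0 < γ) (h0 : 0 < η 0) (τ : ℕ) : 0 < η τ := by
  induction τ with
  | zero => exact h0
  | succ τ ih =>
    rw [h.step_succ_eq]
    split_ifs
    exacts [mul_pos hγ ih, ih]

theorem step_antitone (h : IsSignDescent γ e η) (hγ : γ ≤ 1) (hη : ∀ τ, 0 ≤ η τ) : Antitone η :=
  antitone_nat_of_succ_le fun τ => by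
    rw [h.step_succ_eq]
    split_ifs
    exacts [mul_le_of_le_one_left (hη τ) hγ, le_rfl]

theorem step_add_eq_and_abs_error_add_eq (h : IsSignDescent γ e η) (hη : ∀ τ, 0 < η τ) {τ n : ℕ}
    (hno : ∀ j < n, η (τ + j) ≤ |e (τ + j)|) :
    η (τ + n) = η τ ∧ |e (τ + n)| = |e τ| - n * η τ := by
  induction n with
  | zero => simp
  | succ n ih =>
    obtain ⟨ihη, ihe⟩ := ih fun j hj => hno j (by omega)
    have hle := hno n n.lt_succ_self
    rw [← add_assoc, h.step_succ_of_le hle, h.abs_error_succ_of_le (hη _) hle, ihη, ihe]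
    push_cast
    exact ⟨rfl, by ring⟩

theorem abs_error_mul_le_step_succ (h : IsSignDescent γ e η) (hγ : 0 ≤ γ) (hη : ∀ τ, 0 < η τ)
    {τ : ℕ} (hτ : |e τ| * γ ≤ η τ) : |e (τ + 1)| * γ ≤ η (τ + 1) := by
  by_cases hzero : e τ = 0
  · rw [h.error_succ_eq_zero hzero, abs_zero, zero_mul]
    exact (hη _).le
  rcases lt_or_ge (|e τ|) (η τ) with hlt | hle
  · rw [h.step_succ_of_lt hzero hlt, h.abs_error_succ hzero, abs_of_neg (sub_neg.2 hlt)]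
    nlinarith [abs_nonneg (e τ)]
  · rw [h.step_succ_of_le hle, h.abs_error_succ_of_le (hη τ) hle]
    nlinarith [hη τ]

theorem eventually_abs_error_mul_le_step (h : IsSignDescent γ e η) (hγ0 : 0 ≤ γ) (hγ1 : γ ≤ 1)
    (hη : ∀ τ, 0 < η τ) : ∀ᶠ τ in Filter.atTop, |e τ| * γ ≤ η τ := by
  suffices hT : ∃ T, |e T| * γ ≤ η T by
    obtain ⟨T, hT⟩ := hT
    refine Filter.eventually_atTop.2 ⟨T, fun τ hτ => ?_⟩
    induction τ, hτ using Nat.le_induction with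
    | base => exact hT
    | succ τ _ ih => exact h.abs_error_mul_le_step_succ hγ0 hη ih
  by_contra! hcon
  obtain ⟨n, hn⟩ := exists_nat_gt (|e 0| / η 0)
  have hdrift := h.step_add_eq_and_abs_error_add_eq hη (τ := 0) (n := n) fun j _ =>
    (hcon (0 + j)).le.trans (mul_le_of_le_one_right (abs_nonneg _) hγ1)
  rw [div_lt_iff₀ (hη 0)] at hn
  linarith [abs_nonneg (e (0 + n)), hdrift.2]

noncomputable def potential (γ : ℝ) (e η : ℕ → ℝ) (τ : ℕ) : ℝ :=
  if e τ = 0 then 0 else max (|e τ| * γ) (η τ)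

theorem abs_error_mul_le_potential (τ : ℕ) : |e τ| * γ ≤ potential γ e η τ := by
  unfold potential
  split_ifs with hzero
  · rw [hzero, abs_zero, zero_mul]
  · exact le_max_left _ _

theorem potential_nonneg (hγ : 0 ≤ γ) (τ : ℕ) : 0 ≤ potential γ e η τ :=
  (mul_nonneg (abs_nonneg _) hγ).trans (abs_error_mul_le_potential τ)

theorem step_le_potential {τ : ℕ} (hne : e τ ≠ 0) : η τ ≤ potential γ e η τ := by
  rw [potential, if_neg hne]
  exact le_max_right _ _

theorem potential_le_max {τ : ℕ} (hη : 0 ≤ η τ) :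
    potential γ e η τ ≤ max (|e τ| * γ) (η τ) := by
  unfold potential
  split_ifs
  exacts [le_max_of_le_right hη, le_rfl]

theorem potential_succ_le_of_lt (h : IsSignDescent γ e η) (hγ : 0 ≤ γ) {τ : ℕ} (hne : e τ ≠ 0)
    (hlt : |e τ| < η τ) : potential γ e η (τ + 1) ≤ γ * η τ := by
  have hη : 0 ≤ η τ := (abs_nonneg _).trans hlt.le
  have herr : |e (τ + 1)| ≤ η τ := by
    rw [h.abs_error_succ hne, abs_of_neg (sub_neg.2 hlt)]
    linarith [abs_nonneg (e τ)]
  refine (potential_le_max (h.step_succ_of_lt hne hlt ▸ mul_nonneg hγ hη)).trans (max_le ?_ ?_)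
  · rw [mul_comm γ]
    exact mul_le_mul_of_nonneg_right herr hγ
  · rw [h.step_succ_of_lt hne hlt]

theorem potential_antitone (h : IsSignDescent γ e η) (hγ0 : 0 ≤ γ) (hγ1 : γ ≤ 1)
    (hη : ∀ τ, 0 < η τ) : Antitone (potential γ e η) := by
  refine antitone_nat_of_succ_le fun τ => ?_
  by_cases hzero : e τ = 0
  · rw [potential, potential, if_pos hzero, if_pos (h.error_succ_eq_zero hzero)]
  rcases lt_or_ge (|e τ|) (η τ) with hlt | hle
  · calc potential γ e η (τ + 1) ≤ γ * η τ := h.potential_succ_le_of_lt hγ0 hzero hlt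
      _ ≤ η τ := mul_le_of_le_one_left (hη τ).le hγ1
      _ ≤ potential γ e η τ := step_le_potential hzero
  · calc potential γ e η (τ + 1) ≤ max (|e (τ + 1)| * γ) (η (τ + 1)) := potential_le_max (hη _).le
      _ ≤ max (|e τ| * γ) (η τ) := by
        rw [h.step_succ_of_le hle, h.abs_error_succ_of_le (hη τ) hle]
        gcongr
        linarith [hη τ]
      _ = potential γ e η τ := by rw [potential, if_neg hzero]

theorem potential_add_le (h : IsSignDescent γ e η) (hγ0 : 0 < γ) (hγ1 : γ ≤ 1)
    (hη : ∀ τ, 0 < η τ) {C τ : ℕ} (hC : γ⁻¹ ≤ C) (hτ : |e τ| * γ ≤ η τ) :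
    potential γ e η (τ + C) ≤ γ * potential γ e η τ := by
  have hV := h.potential_antitone hγ0.le hγ1 hη
  by_contra! hlt
  have hne : ∀ j ≤ C, e (τ + j) ≠ 0 := fun j hj hzero => by
    have hzero' : potential γ e η (τ + C) = 0 := by
      rw [potential, if_pos (h.error_eq_zero_of_le hzero (by omega))]
    have : 0 ≤ potential γ e η τ := potential_nonneg hγ0.le τ
    nlinarith
  have hηV : η τ ≤ potential γ e η τ := step_le_potential (hne 0 (Nat.zero_le C))
  have hno : ∀ j < C, η (τ + j) ≤ |e (τ + j)| := fun j hj => by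
    by_contra! hflip
    have := calc potential γ e η (τ + C) ≤ potential γ e η (τ + j + 1) := hV (by omega)
      _ ≤ γ * η (τ + j) := h.potential_succ_le_of_lt hγ0.le (hne j hj.le) hflip
      _ ≤ γ * η τ := mul_le_mul_of_nonneg_left
          (h.step_antitone hγ1 (fun τ => (hη τ).le) (Nat.le_add_right τ j)) hγ0.le
      _ ≤ γ * potential γ e η τ := mul_le_mul_of_nonneg_left hηV hγ0.le
    linarith
  have hdrift := (h.step_add_eq_and_abs_error_add_eq hη hno).2
  have hbound : |e τ| ≤ C * η τ := calc
    |e τ| ≤ γ⁻¹ * η τ := by rw [← div_eq_inv_mul, le_div_iff₀ hγ0]; exact hτ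
    _ ≤ C * η τ := mul_le_mul_of_nonneg_right hC (hη τ).le
  exact hne C le_rfl (abs_nonpos_iff.1 (by linarith))

end IsSignDescent

open Classical in
theorem exponential_convergence_scalar_general
    (θs γ η0 : ℝ) (hγ0 : 0 < γ) (hγ1 : γ < 1) (hη0 : 0 < η0)
    (θ η s : ℕ → ℝ)
    (hηinit : η 0 = η0)
    (hs : ∀ τ, s τ = -Real.sign (θ τ - θs))
    (hθrec : ∀ τ, θ (τ + 1) = θ τ + s τ * η τ)
    (hηrec : ∀ τ, η (τ + 1) = if s (τ + 1) * s τ = -1 then γ * η τ else η τ) :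
    ∃ α : ℝ, 0 < α ∧
      ∀ τ : ℕ, |θ τ - θs| ≤ α * γ ^ ((τ : ℝ) / ((⌈γ⁻¹⌉ : ℤ) : ℝ)) := by
  set e : ℕ → ℝ := fun τ => θ τ - θs
  have h : IsSignDescent γ e η :=
    { error_succ := fun τ => by simp only [e, hθrec, hs]; ring
      step_succ := fun τ => by simpa only [hs, neg_mul_neg] using hηrec τ }
  have hη := h.step_pos hγ0 (hηinit ▸ hη0)
  obtain ⟨T, hT⟩ :=
    Filter.eventually_atTop.1 (h.eventually_abs_error_mul_le_step hγ0.le hγ1.le hη)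
  obtain ⟨α, hα, hV⟩ := (h.potential_antitone hγ0.le hγ1.le hη).exists_le_mul_rpow_div hγ0 hγ1.le
    (Nat.ceil_pos.2 (inv_pos.2 hγ0))
    fun τ hτ => h.potential_add_le hγ0 hγ1.le hη (Nat.le_ceil _) (hT τ hτ)
  have hC : ((⌈γ⁻¹⌉ : ℤ) : ℝ) = ((⌈γ⁻¹⌉₊ : ℕ) : ℝ) := by
    rw [← Int.natCast_ceil_eq_ceil (inv_nonneg.2 hγ0.le), Int.cast_natCast]
  refine ⟨α / γ, div_pos hα hγ0, fun τ => ?_⟩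
  rw [hC, div_mul_eq_mul_div, le_div_iff₀ hγ0]
  exact (IsSignDescent.abs_error_mul_le_potential τ).trans (hV τ)

open Classical in
/-- Theorem 1, scalar case: exponential convergence
`|θ(τ) - θ*| ≤ α·γ^{τ/C}` with `C = ⌈γ⁻¹⌉` (real power). -/
theorem exponential_convergence_scalar
    (θs γ η0 θ0 : ℝ) (hγ0 : 0 < γ) (hγ1 : γ < 1) (hη0 : 0 < η0)
    (θ η s : ℕ → ℝ)
    (hθinit : θ 0 = θ0) (hηinit : η 0 = η0)
    (hs : ∀ τ, s τ = -Real.sign (θ τ - θs))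
    (hθrec : ∀ τ, θ (τ + 1) = θ τ + s τ * η τ)
    (hηrec : ∀ τ, η (τ + 1) = if s (τ + 1) * s τ = -1 then γ * η τ else η τ) :
    ∃ α : ℝ, 0 < α ∧
      ∀ τ : ℕ, |θ τ - θs| ≤ α * γ ^ ((τ : ℝ) / ((⌈γ⁻¹⌉ : ℤ) : ℝ)) :=
  exponential_convergence_scalar_general θs γ η0 hγ0 hγ1 hη0 θ η s hηinit hs hθrec hηrec
end

section
/- Under the scalar sign dynamics, the parameter sequence converges: θ(τ) → θ* as τ → ∞. -/
/-!
Write `e = θ - θ*`. If `e` ever hits `0` it stays there. Otherwise, while `|e| ≥ η` the error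
shrinks by `η` in absolute value and `η` is unchanged, so this cannot last forever: the iterate
overshoots (`|e| < η`) infinitely often, and every overshoot multiplies `η` by `γ`. An antitone
sequence contracted by `γ` infinitely often tends to `0`. After the first overshoot the error is
trapped, `γ |e| ≤ η`, hence `e → 0`.
-/

open Filter Topology

namespace Real

theorem sign_mul_abs (r : ℝ) : sign r * |r| = r := by
  rcases lt_trichotomy r 0 with hr | rfl | hr
  · rw [sign_of_neg hr, abs_of_neg hr]; ring
  · simp
  · rw [sign_of_pos hr, abs_of_pos hr, one_mul]

theorem sign_mul_self_s10 (r : ℝ) : sign r * r = |r| := by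
  rcases lt_trichotomy r 0 with hr | rfl | hr
  · rw [sign_of_neg hr, abs_of_neg hr]; ring
  · simp
  · rw [sign_of_pos hr, abs_of_pos hr, one_mul]

theorem abs_sign_le_one (r : ℝ) : |sign r| ≤ 1 := by
  rcases sign_apply_eq r with h | h | h <;> simp [h]

theorem sign_mul_sign_eq_neg_one_iff_s10 {x y : ℝ} : sign x * sign y = -1 ↔ x * y < 0 := by
  unfold sign
  split_ifs <;> constructor <;> intro <;> nlinarith

end Real

theorem tendsto_zero_of_antitone_of_frequently_le_mul {u : ℕ → ℝ} {γ : ℝ} (hγ : γ < 1)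
    (hu : Antitone u) (hu0 : ∀ n, 0 ≤ u n) (hfreq : ∃ᶠ n in atTop, u (n + 1) ≤ γ * u n) :
    Tendsto u atTop (𝓝 0) := by
  have hlim := tendsto_atTop_ciInf hu ⟨0, Set.forall_mem_range.2 hu0⟩
  have hL0 : 0 ≤ ⨅ n, u n := le_ciInf hu0
  have hL : ⨅ n, u n ≤ γ * ⨅ n, u n :=
    le_of_tendsto_of_tendsto_of_frequently (hlim.comp (tendsto_add_atTop_nat 1))
      (hlim.const_mul γ) hfreq
  rwa [show ⨅ n, u n = 0 by nlinarith] at hlim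

/-- `e` is the error `θ - θ*` and `η` the step size; since `s = -sign e`, the paper's flip test
`s (τ + 1) * s τ = -1` reads `sign (e (τ + 1)) * sign (e τ) = -1`. -/
structure SignDynamics (γ : ℝ) (e η : ℕ → ℝ) : Prop where
  error_succ : ∀ τ, e (τ + 1) = e τ - Real.sign (e τ) * η τ
  step_succ : ∀ τ,
    η (τ + 1) = if Real.sign (e (τ + 1)) * Real.sign (e τ) = -1 then γ * η τ else η τ

namespace SignDynamics

variable {γ : ℝ} {e η : ℕ → ℝ}

theorem error_succ_eq (h : SignDynamics γ e η) (τ : ℕ) :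
    e (τ + 1) = Real.sign (e τ) * (|e τ| - η τ) := by
  rw [h.error_succ, mul_sub, Real.sign_mul_abs]

theorem abs_error_succ_le (h : SignDynamics γ e η) (τ : ℕ) :
    |e (τ + 1)| ≤ |(|e τ| - η τ)| := by
  rw [h.error_succ_eq, abs_mul]
  exact mul_le_of_le_one_left (abs_nonneg _) (Real.abs_sign_le_one _)

theorem error_succ_mul_error (h : SignDynamics γ e η) (τ : ℕ) :
    e (τ + 1) * e τ = |e τ| * (|e τ| - η τ) := by
  rw [h.error_succ_eq, mul_right_comm, Real.sign_mul_self_s10]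

theorem step_succ_of_le_abs_error (h : SignDynamics γ e η) {τ : ℕ} (hle : η τ ≤ |e τ|) :
    η (τ + 1) = η τ := by
  rw [h.step_succ, if_neg]
  rw [Real.sign_mul_sign_eq_neg_one_iff_s10, h.error_succ_mul_error, not_lt]
  exact mul_nonneg (abs_nonneg _) (sub_nonneg.2 hle)

theorem step_succ_of_abs_error_lt (h : SignDynamics γ e η) {τ : ℕ} (he : e τ ≠ 0)
    (hlt : |e τ| < η τ) : η (τ + 1) = γ * η τ := by
  rw [h.step_succ, if_pos]
  rw [Real.sign_mul_sign_eq_neg_one_iff_s10, h.error_succ_mul_error]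
  exact mul_neg_of_pos_of_neg (abs_pos.2 he) (sub_neg.2 hlt)

theorem step_pos (h : SignDynamics γ e η) (hγ : 0 < γ) (hη : 0 < η 0) (τ : ℕ) : 0 < η τ := by
  induction τ with
  | zero => exact hη
  | succ τ ih =>
    rw [h.step_succ]
    split
    · exact mul_pos hγ ih
    · exact ih

theorem step_antitone (h : SignDynamics γ e η) (hγ0 : 0 < γ) (hγ1 : γ ≤ 1) (hη : 0 < η 0) :
    Antitone η := by
  refine antitone_nat_of_succ_le fun τ => ?_
  rw [h.step_succ]
  split
  · exact mul_le_of_le_one_left (h.step_pos hγ0 hη τ).le hγ1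
  · exact le_rfl

theorem error_eq_zero_of_le (h : SignDynamics γ e η) {τ₀ τ : ℕ} (h0 : e τ₀ = 0)
    (hτ : τ₀ ≤ τ) : e τ = 0 := by
  induction τ, hτ using Nat.le_induction with
  | base => exact h0
  | succ τ _ ih => rw [h.error_succ, ih, Real.sign_zero]; ring

theorem exists_ge_abs_error_lt_step (h : SignDynamics γ e η) (hη : ∀ τ, 0 < η τ) (τ₀ : ℕ) :
    ∃ τ ≥ τ₀, |e τ| < η τ := by
  by_contra! hno
  have hdescent : ∀ k : ℕ, η (τ₀ + k) = η τ₀ ∧ |e (τ₀ + k)| ≤ |e τ₀| - k * η τ₀ := by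
    intro k
    induction k with
    | zero => simp
    | succ k ih =>
      have hle := hno (τ₀ + k) (Nat.le_add_right _ _)
      have habs := h.abs_error_succ_le (τ₀ + k)
      rw [abs_of_nonneg (sub_nonneg.2 hle)] at habs
      rw [← add_assoc]
      refine ⟨(h.step_succ_of_le_abs_error hle).trans ih.1, ?_⟩
      push_cast
      linarith [ih.1, ih.2]
  obtain ⟨k, hk⟩ := exists_nat_gt (|e τ₀| / η τ₀)
  rw [div_lt_iff₀ (hη τ₀)] at hk
  linarith [abs_nonneg (e (τ₀ + k)), (hdescent k).2]

theorem gamma_mul_abs_error_succ_le_of_lt (h : SignDynamics γ e η) (hγ : 0 ≤ γ) {τ : ℕ}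
    (he : e τ ≠ 0) (hlt : |e τ| < η τ) : γ * |e (τ + 1)| ≤ η (τ + 1) := by
  have habs := h.abs_error_succ_le τ
  rw [abs_of_neg (sub_neg.2 hlt)] at habs
  rw [h.step_succ_of_abs_error_lt he hlt]
  exact mul_le_mul_of_nonneg_left (by linarith [abs_nonneg (e τ)]) hγ

theorem gamma_mul_abs_error_succ_le (h : SignDynamics γ e η) (hγ : 0 ≤ γ) {τ : ℕ}
    (he : e τ ≠ 0) (hη : 0 ≤ η τ) (hinv : γ * |e τ| ≤ η τ) :
    γ * |e (τ + 1)| ≤ η (τ + 1) := by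
  rcases lt_or_ge (|e τ|) (η τ) with hlt | hle
  · exact h.gamma_mul_abs_error_succ_le_of_lt hγ he hlt
  · have habs := h.abs_error_succ_le τ
    rw [abs_of_nonneg (sub_nonneg.2 hle)] at habs
    rw [h.step_succ_of_le_abs_error hle]
    calc γ * |e (τ + 1)| ≤ γ * |e τ| := mul_le_mul_of_nonneg_left (by linarith) hγ
      _ ≤ η τ := hinv

theorem eventually_gamma_mul_abs_error_le (h : SignDynamics γ e η) (hγ : 0 ≤ γ)
    (he : ∀ τ, e τ ≠ 0) (hη : ∀ τ, 0 < η τ) : ∀ᶠ τ in atTop, γ * |e τ| ≤ η τ := by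
  obtain ⟨τ₀, -, hlt⟩ := h.exists_ge_abs_error_lt_step hη 0
  filter_upwards [eventually_gt_atTop τ₀] with τ hτ
  induction τ, hτ using Nat.le_induction with
  | base => exact h.gamma_mul_abs_error_succ_le_of_lt hγ (he τ₀) hlt
  | succ τ _ ih => exact h.gamma_mul_abs_error_succ_le hγ (he τ) (hη τ).le ih

theorem step_tendsto_zero (h : SignDynamics γ e η) (hγ0 : 0 < γ) (hγ1 : γ < 1) (hη : 0 < η 0)
    (he : ∀ τ, e τ ≠ 0) : Tendsto η atTop (𝓝 0) := by
  have hpos := h.step_pos hγ0 hη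
  refine tendsto_zero_of_antitone_of_frequently_le_mul hγ1 (h.step_antitone hγ0 hγ1.le hη)
    (fun τ => (hpos τ).le) (frequently_atTop.2 fun τ₀ => ?_)
  obtain ⟨τ, hτ, hlt⟩ := h.exists_ge_abs_error_lt_step hpos τ₀
  exact ⟨τ, hτ, (h.step_succ_of_abs_error_lt (he τ) hlt).le⟩

theorem error_tendsto_zero (h : SignDynamics γ e η) (hγ0 : 0 < γ) (hγ1 : γ < 1)
    (hη : 0 < η 0) : Tendsto e atTop (𝓝 0) := by
  by_cases hz : ∃ τ₀, e τ₀ = 0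
  · obtain ⟨τ₀, h0⟩ := hz
    exact tendsto_const_nhds.congr'
      (eventually_atTop.2 ⟨τ₀, fun τ hτ => (h.error_eq_zero_of_le h0 hτ).symm⟩)
  push Not at hz
  have hbound : Tendsto (fun τ => η τ / γ) atTop (𝓝 0) := by
    simpa using (h.step_tendsto_zero hγ0 hγ1 hη hz).div_const γ
  refine squeeze_zero_norm' ?_ hbound
  filter_upwards [h.eventually_gamma_mul_abs_error_le hγ0.le hz (h.step_pos hγ0 hη)] with τ hτ
  rwa [Real.norm_eq_abs, le_div_iff₀ hγ0, mul_comm]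

end SignDynamics

open Classical in
theorem theta_tendsto_thetaStar_general
    (θs γ η0 : ℝ) (hγ0 : 0 < γ) (hγ1 : γ < 1) (hη0 : 0 < η0)
    (θ η s : ℕ → ℝ)
    (hηinit : η 0 = η0)
    (hs : ∀ τ, s τ = -Real.sign (θ τ - θs))
    (hθrec : ∀ τ, θ (τ + 1) = θ τ + s τ * η τ)
    (hηrec : ∀ τ, η (τ + 1) = if s (τ + 1) * s τ = -1 then γ * η τ else η τ) :
    Filter.Tendsto θ Filter.atTop (nhds θs) := by
  have hdyn : SignDynamics γ (fun τ => θ τ - θs) η :=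
    ⟨fun τ => by rw [hθrec, hs]; ring, fun τ => by rw [hηrec, hs, hs, neg_mul_neg]⟩
  simpa using (hdyn.error_tendsto_zero hγ0 hγ1 (hηinit ▸ hη0)).add_const θs

open Classical in
/-- Under the scalar sign dynamics, `θ(τ) → θ*` as `τ → ∞`. -/
theorem theta_tendsto_thetaStar
    (θs γ η0 θ0 : ℝ) (hγ0 : 0 < γ) (hγ1 : γ < 1) (hη0 : 0 < η0)
    (θ η s : ℕ → ℝ)
    (hθinit : θ 0 = θ0) (hηinit : η 0 = η0)
    (hs : ∀ τ, s τ = -Real.sign (θ τ - θs))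
    (hθrec : ∀ τ, θ (τ + 1) = θ τ + s τ * η τ)
    (hηrec : ∀ τ, η (τ + 1) = if s (τ + 1) * s τ = -1 then γ * η τ else η τ) :
    Filter.Tendsto θ Filter.atTop (nhds θs) :=
  theta_tendsto_thetaStar_general θs γ η0 hγ0 hγ1 hη0 θ η s hηinit hs hθrec hηrec
end

section
/- (Theorem 1 with gradient oracle, scalar case) Let J : ℝ → ℝ be a convex differentiable function with unique minimizer θ* (i.e. J(θ*) < J(θ) for all θ ≠ θ*). Fix γ ∈ (0,1), η₀ > 0, θ₀ ∈ ℝ, and define θ, η, s : ℕ → ℝ by θ(0) = θ₀, η(0) = η₀, s(τ) = -sgn(J'(θ(τ))), θ(τ+1) = θ(τ) + s(τ)·η(τ), and for τ ≥ 1, η(τ) = γ·η(τ-1) if s(τ)·s(τ-1) = -1 and η(τ) = η(τ-1) otherwise. Then there exists α > 0 such that for all τ ≥ 0, |θ(τ) - θ*| ≤ α · γ^{τ/C}, where C = ⌈γ⁻¹⌉. -/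
set_option maxHeartbeats 1000000 in
open Classical in
/-- Theorem 1 with gradient oracle, scalar case: with
`s(τ) = -sgn(J'(θ(τ)))` for a convex differentiable `J` with unique minimizer `θ*`,
the parameter converges exponentially: `|θ(τ) - θ*| ≤ α·γ^{τ/C}`, `C = ⌈γ⁻¹⌉`. -/
theorem exponential_convergence_gradient_oracle
    (J : ℝ → ℝ) (θs : ℝ)
    (hconv : ConvexOn ℝ Set.univ J)
    (hdiff : Differentiable ℝ J)
    (hmin : ∀ x : ℝ, x ≠ θs → J θs < J x)
    (γ η0 θ0 : ℝ) (hγ0 : 0 < γ) (hγ1 : γ < 1) (hη0 : 0 < η0)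
    (θ η s : ℕ → ℝ)
    (hθinit : θ 0 = θ0) (hηinit : η 0 = η0)
    (hs : ∀ τ, s τ = -Real.sign (deriv J (θ τ)))
    (hθrec : ∀ τ, θ (τ + 1) = θ τ + s τ * η τ)
    (hηrec : ∀ τ, η (τ + 1) = if s (τ + 1) * s τ = -1 then γ * η τ else η τ) :
    ∃ α : ℝ, 0 < α ∧
      ∀ τ : ℕ, |θ τ - θs| ≤ α * γ ^ ((τ : ℝ) / ((⌈γ⁻¹⌉ : ℤ) : ℝ)) := by
  set E : ℝ := ((⌈γ⁻¹⌉ : ℤ) : ℝ) with hE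
  have hCz1 : (1 : ℤ) ≤ ⌈γ⁻¹⌉ := Int.ceil_pos.mpr (inv_pos.mpr hγ0)
  have hE1 : (1 : ℝ) ≤ E := by rw [hE]; exact_mod_cast hCz1
  have hE0 : (0 : ℝ) < E := lt_of_lt_of_le one_pos hE1
  have hEinv : γ⁻¹ ≤ E := Int.le_ceil γ⁻¹
  set C : ℕ := (⌈γ⁻¹⌉ : ℤ).toNat with hC
  have hCpos : 0 < C := by rw [hC]; omega
  have hCE : (C : ℝ) = E := by
    rw [hC, hE]
    norm_cast
    exact Int.toNat_of_nonneg (le_trans zero_le_one hCz1)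
  -- sign of the derivative equals sign of the displacement
  have hsign : ∀ x : ℝ, Real.sign (deriv J x) = Real.sign (x - θs) := by
    intro x
    rcases lt_trichotomy x θs with h | h | h
    · have hslope : deriv J x ≤ (J θs - J x) / (θs - x) := by
        have := hconv.deriv_le_slope (Set.mem_univ x) (Set.mem_univ θs) h (hdiff x)
        rwa [slope_def_field] at this
      have hJ : J θs < J x := hmin x (ne_of_lt h)
      have hneg : deriv J x < 0 :=
        lt_of_le_of_lt hslope (div_neg_of_neg_of_pos (by linarith) (by linarith))
      rw [Real.sign_of_neg hneg, Real.sign_of_neg (by linarith : x - θs < 0)]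
    · subst h
      have hall : ∀ y, J x ≤ J y := by
        intro y
        by_cases hy : y = x
        · rw [hy]
        · exact (hmin y hy).le
      have hloc : IsLocalMin J x := Filter.Eventually.of_forall hall
      rw [hloc.deriv_eq_zero]
      simp
    · have hslope : (J x - J θs) / (x - θs) ≤ deriv J x := by
        have := hconv.slope_le_deriv (Set.mem_univ θs) (Set.mem_univ x) h (hdiff x)
        rwa [slope_def_field] at this
      have hJ : J θs < J x := hmin x (ne_of_gt h)
      have hpos : 0 < deriv J x :=
        lt_of_lt_of_le (div_pos (by linarith) (by linarith)) hslope
      rw [Real.sign_of_pos hpos, Real.sign_of_pos (by linarith : 0 < x - θs)]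
  have hsD : ∀ τ, s τ = -Real.sign (θ τ - θs) := fun τ => by rw [hs τ, hsign]
  have hD : ∀ τ, θ (τ + 1) - θs = (θ τ - θs) - Real.sign (θ τ - θs) * η τ := by
    intro τ; rw [hθrec τ, hsD τ]; ring
  -- positivity and monotonicity of η
  have hηpos : ∀ τ, 0 < η τ := by
    intro τ
    induction τ with
    | zero => rw [hηinit]; exact hη0
    | succ n ih =>
      rw [hηrec n]
      split
      · exact mul_pos hγ0 ih
      · exact ih
  have hηstep : ∀ τ, η (τ + 1) ≤ η τ := by
    intro τ
    rw [hηrec τ]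
    split
    · nlinarith [hηpos τ]
    · exact le_refl _
  have hηanti : Antitone η := antitone_nat_of_succ_le hηstep
  -- persistence at the minimizer
  have hzero : ∀ τ, θ τ = θs → θ (τ + 1) = θs := by
    intro τ h
    rw [hθrec τ, hsD τ, h]
    simp
  have hzero' : ∀ a b, a ≤ b → θ a = θs → θ b = θs := by
    intro a b hab ha
    induction b, hab using Nat.le_induction with
    | base => exact ha
    | succ n _ ih => exact hzero n ih
  -- distance recurrence away from the minimizer
  have hdstep : ∀ τ, θ τ ≠ θs → |θ (τ + 1) - θs| = |(|θ τ - θs|) - η τ| := by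
    intro τ hne
    rcases lt_or_gt_of_ne (sub_ne_zero.mpr hne) with h | h
    · rw [hD τ, Real.sign_of_neg h, abs_of_neg h,
        show θ τ - θs - -1 * η τ = -(-(θ τ - θs) - η τ) by ring, abs_neg]
    · rw [hD τ, Real.sign_of_pos h, abs_of_pos h, one_mul]
  -- η update: flip and no-flip
  have hflip : ∀ τ, θ τ ≠ θs → |θ τ - θs| < η τ → η (τ + 1) = γ * η τ := by
    intro τ hne hlt
    rw [hηrec τ, if_pos]
    rcases lt_or_gt_of_ne (sub_ne_zero.mpr hne) with h | h
    · have h1 : s τ = 1 := by rw [hsD τ, Real.sign_of_neg h]; norm_num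
      have h2 : 0 < θ (τ + 1) - θs := by
        rw [hD τ, Real.sign_of_neg h]
        rw [abs_of_neg h] at hlt
        linarith
      have h3 : s (τ + 1) = -1 := by rw [hsD (τ + 1), Real.sign_of_pos h2]
      rw [h1, h3]; norm_num
    · have h1 : s τ = -1 := by rw [hsD τ, Real.sign_of_pos h]
      have h2 : θ (τ + 1) - θs < 0 := by
        rw [hD τ, Real.sign_of_pos h]
        rw [abs_of_pos h] at hlt
        linarith
      have h3 : s (τ + 1) = 1 := by rw [hsD (τ + 1), Real.sign_of_neg h2]; norm_num
      rw [h1, h3]; norm_num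
  have hnoflip : ∀ τ, (θ τ = θs ∨ η τ ≤ |θ τ - θs|) → η (τ + 1) = η τ := by
    intro τ hcase
    rw [hηrec τ, if_neg]
    rcases hcase with h | h
    · have h1 : s τ = 0 := by
        rw [hsD τ, h]
        simp
      rw [h1]; norm_num
    · rcases lt_trichotomy (θ τ - θs) 0 with hlt | heq | hgt
      · have h1 : s τ = 1 := by rw [hsD τ, Real.sign_of_neg hlt]; norm_num
        have h2 : θ (τ + 1) - θs ≤ 0 := by
          rw [hD τ, Real.sign_of_neg hlt]
          rw [abs_of_neg hlt] at h
          linarith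
        rcases eq_or_lt_of_le h2 with h2' | h2'
        · have h3 : s (τ + 1) = 0 := by rw [hsD (τ + 1), h2']; simp
          rw [h1, h3]; norm_num
        · have h3 : s (τ + 1) = 1 := by rw [hsD (τ + 1), Real.sign_of_neg h2']; norm_num
          rw [h1, h3]; norm_num
      · exfalso
        rw [heq] at h
        simp at h
        have := hηpos τ
        linarith
      · have h1 : s τ = -1 := by rw [hsD τ, Real.sign_of_pos hgt]
        have h2 : 0 ≤ θ (τ + 1) - θs := by
          rw [hD τ, Real.sign_of_pos hgt]
          rw [abs_of_pos hgt] at h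
          linarith
        rcases eq_or_lt_of_le h2 with h2' | h2'
        · have h3 : s (τ + 1) = 0 := by rw [hsD (τ + 1), ← h2']; simp
          rw [h1, h3]; norm_num
        · have h3 : s (τ + 1) = -1 := by rw [hsD (τ + 1), Real.sign_of_pos h2']
          rw [h1, h3]; norm_num
  -- crude growth bound
  have habsign : ∀ x : ℝ, |Real.sign x| ≤ 1 := by
    intro x
    rcases lt_trichotomy x 0 with h | h | h
    · simp [Real.sign_of_neg h]
    · simp [h]
    · simp [Real.sign_of_pos h]
  have hgrow : ∀ τ, |θ (τ + 1) - θs| ≤ |θ τ - θs| + η τ := by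
    intro τ
    rw [hD τ]
    calc |θ τ - θs - Real.sign (θ τ - θs) * η τ|
        ≤ |θ τ - θs| + |Real.sign (θ τ - θs) * η τ| := abs_sub _ _
      _ ≤ |θ τ - θs| + η τ := by
          have := habsign (θ τ - θs)
          rw [abs_mul, abs_of_pos (hηpos τ)]
          nlinarith [hηpos τ, abs_nonneg (Real.sign (θ τ - θs))]
  have hpre : ∀ τ : ℕ, |θ τ - θs| ≤ |θ 0 - θs| + τ * η 0 := by
    intro τ
    induction τ with
    | zero => simp
    | succ n ih =>
      have := hgrow n
      have hη : η n ≤ η 0 := hηanti (Nat.zero_le n)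
      push_cast
      push_cast at ih
      linarith
  -- Phase 1: reach the region d ≤ η/γ
  have haux : ∀ n : ℕ, (∃ t ≤ n, |θ t - θs| ≤ η t / γ) ∨
      (η n = η 0 ∧ |θ n - θs| + n * η 0 ≤ |θ 0 - θs|) := by
    intro n
    induction n with
    | zero =>
      by_cases h : |θ 0 - θs| ≤ η 0 / γ
      · exact Or.inl ⟨0, le_refl 0, h⟩
      · exact Or.inr ⟨rfl, by simp⟩
    | succ n ih =>
      rcases ih with ⟨t, ht, h⟩ | ⟨hηn, hdn⟩
      · exact Or.inl ⟨t, le_trans ht (Nat.le_succ n), h⟩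
      · by_cases h : |θ n - θs| ≤ η n / γ
        · exact Or.inl ⟨n, Nat.le_succ n, h⟩
        · push_neg at h
          have hηγ : η n ≤ η n / γ := by
            rw [div_eq_inv_mul]
            nlinarith [hηpos n, (one_le_inv₀ hγ0).mpr hγ1.le]
          have hle : η n ≤ |θ n - θs| := le_of_lt (lt_of_le_of_lt hηγ h)
          have hne : θ n ≠ θs := by
            intro hcon
            rw [hcon] at h
            simp at h
            have := hηpos n
            have : η n / γ > 0 := div_pos this hγ0
            linarith
          refine Or.inr ⟨?_, ?_⟩
          · rw [hnoflip n (Or.inr hle), hηn]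
          · have hd1 : |θ (n + 1) - θs| = |θ n - θs| - η n := by
              rw [hdstep n hne, abs_of_nonneg (by linarith)]
            rw [hd1]
            push_cast
            push_cast at hdn
            rw [hηn]
            linarith
  obtain ⟨T, hT⟩ : ∃ t, |θ t - θs| ≤ η t / γ := by
    set N : ℕ := ⌈|θ 0 - θs| / η 0⌉₊ + 1 with hN
    rcases haux N with ⟨t, _, h⟩ | ⟨_, hdn⟩
    · exact ⟨t, h⟩
    · exfalso
      have h1 : (N : ℝ) * η 0 ≤ |θ 0 - θs| := by
        have := abs_nonneg (θ N - θs)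
        linarith
      have hη0' : 0 < η 0 := hηpos 0
      have h2 : (N : ℝ) ≤ |θ 0 - θs| / η 0 := by
        rw [le_div_iff₀ hη0']
        linarith
      have h3 : |θ 0 - θs| / η 0 ≤ (⌈|θ 0 - θs| / η 0⌉₊ : ℝ) := Nat.le_ceil _
      have h4 : (N : ℝ) = (⌈|θ 0 - θs| / η 0⌉₊ : ℝ) + 1 := by rw [hN]; push_cast; ring
      linarith
  -- Phase 2: invariance of d ≤ η/γ
  have hinv : ∀ u, T ≤ u → |θ u - θs| ≤ η u / γ := by
    intro u hu
    induction u, hu using Nat.le_induction with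
    | base => exact hT
    | succ u _ ih =>
      by_cases hz : θ u = θs
      · rw [hzero u hz]
        have := div_pos (hηpos (u + 1)) hγ0
        simp only [sub_self, abs_zero]
        linarith
      · rcases lt_or_ge (|θ u - θs|) (η u) with hlt | hge
        · have h1 : η (u + 1) = γ * η u := hflip u hz hlt
          have h2 : |θ (u + 1) - θs| ≤ η u := by
            rw [hdstep u hz, abs_of_nonpos (by linarith)]
            have := abs_nonneg (θ u - θs)
            linarith
          rw [h1, mul_div_cancel_left₀ _ (ne_of_gt hγ0)]
          exact h2
        · have h1 : η (u + 1) = η u := hnoflip u (Or.inr hge)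
          have h2 : |θ (u + 1) - θs| = |θ u - θs| - η u := by
            rw [hdstep u hz, abs_of_nonneg (by linarith)]
          rw [h1, h2]
          have := hηpos u
          linarith
  -- Phase 3: a flip (or hitting θs) happens within C steps
  have hwin : ∀ u, T ≤ u → θ (u + C) = θs ∨ η (u + C) ≤ γ * η u := by
    intro u hu
    by_cases hz : ∃ t ≤ u + C, θ t = θs
    · obtain ⟨t, ht, hzt⟩ := hz
      exact Or.inl (hzero' t (u + C) ht hzt)
    · push_neg at hz
      by_cases hf : ∃ t, u ≤ t ∧ t < u + C ∧ |θ t - θs| < η t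
      · obtain ⟨t, ht1, ht2, ht3⟩ := hf
        have hne : θ t ≠ θs := hz t (le_of_lt ht2)
        have h1 : η (t + 1) = γ * η t := hflip t hne ht3
        have h2 : η (u + C) ≤ η (t + 1) := hηanti (by omega)
        have h3 : η t ≤ η u := hηanti ht1
        refine Or.inr ?_
        calc η (u + C) ≤ γ * η t := by rw [← h1]; exact h2
          _ ≤ γ * η u := by nlinarith
      · push_neg at hf
        exfalso
        have claim : ∀ k, k ≤ C → η (u + k) = η u ∧
            |θ (u + k) - θs| + k * η u ≤ |θ u - θs| := by
          intro k
          induction k with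
          | zero => intro _; simp
          | succ k ih =>
            intro hk
            obtain ⟨hηk, hdk⟩ := ih (by omega)
            have ht1 : u ≤ u + k := Nat.le_add_right u k
            have ht2 : u + k < u + C := by omega
            have hge : η (u + k) ≤ |θ (u + k) - θs| := hf (u + k) ht1 ht2
            have hne : θ (u + k) ≠ θs := hz (u + k) (by omega)
            constructor
            · rw [show u + (k + 1) = (u + k) + 1 by ring, hnoflip (u + k) (Or.inr hge), hηk]
            · have hd1 : |θ (u + k + 1) - θs| = |θ (u + k) - θs| - η (u + k) := by
                rw [hdstep (u + k) hne, abs_of_nonneg (by linarith)]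
              rw [show u + (k + 1) = (u + k) + 1 by ring, hd1, hηk]
              push_cast
              push_cast at hdk
              linarith
        obtain ⟨_, hdC⟩ := claim C (le_refl C)
        have hposC : 0 < |θ (u + C) - θs| :=
          abs_pos.mpr (sub_ne_zero.mpr (hz (u + C) (le_refl _)))
        have hinvu : |θ u - θs| ≤ η u / γ := hinv u hu
        have hCη : η u / γ ≤ (C : ℝ) * η u := by
          rw [div_eq_inv_mul]
          exact mul_le_mul_of_nonneg_right (by rw [hCE]; exact hEinv) (hηpos u).le
        linarith
  -- Phase 4: geometric decay of η along multiples of C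
  have hgeo : ∀ k : ℕ, θ (T + k * C) = θs ∨ η (T + k * C) ≤ γ ^ k * η T := by
    intro k
    induction k with
    | zero => exact Or.inr (by simp)
    | succ k ih =>
      have hidx : T + (k + 1) * C = (T + k * C) + C := by ring
      rcases ih with h | h
      · exact Or.inl (hzero' _ _ (by omega) h)
      · rcases hwin (T + k * C) (Nat.le_add_right T _) with h' | h'
        · exact Or.inl (by rw [hidx]; exact h')
        · refine Or.inr ?_
          rw [hidx]
          calc η ((T + k * C) + C) ≤ γ * η (T + k * C) := h'
            _ ≤ γ * (γ ^ k * η T) := by nlinarith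
            _ = γ ^ (k + 1) * η T := by ring
  -- Final assembly
  set A : ℝ := |θ 0 - θs| + (T : ℝ) * η 0 + η 0 / γ + 1 with hA
  have hη00 : 0 < η 0 := hηpos 0
  have hA1 : (1 : ℝ) ≤ A := by
    rw [hA]
    have h1 : 0 ≤ |θ 0 - θs| := abs_nonneg _
    have h2 : 0 ≤ (T : ℝ) * η 0 := by positivity
    have h3 : 0 < η 0 / γ := div_pos hη00 hγ0
    linarith
  have hA0 : (0 : ℝ) < A := lt_of_lt_of_le one_pos hA1
  refine ⟨A * γ ^ (-(T : ℝ) / E - 1), mul_pos hA0 (Real.rpow_pos_of_pos hγ0 _), ?_⟩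
  intro τ
  have hsplit : A * γ ^ (-(T : ℝ) / E - 1) * γ ^ ((τ : ℝ) / E) =
      A * γ ^ ((τ : ℝ) / E - (T : ℝ) / E - 1) := by
    rw [mul_assoc, ← Real.rpow_add hγ0]
    ring_nf
  rw [hsplit]
  rcases le_or_gt τ T with hτT | hτT
  · have h1 : |θ τ - θs| ≤ |θ 0 - θs| + (τ : ℝ) * η 0 := hpre τ
    have h2 : (τ : ℝ) * η 0 ≤ (T : ℝ) * η 0 := by
      have : (τ : ℝ) ≤ (T : ℝ) := by exact_mod_cast hτT
      nlinarith
    have h3 : |θ τ - θs| ≤ A := by rw [hA]; have := div_pos hη00 hγ0; linarith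
    have hexp : (τ : ℝ) / E - (T : ℝ) / E - 1 ≤ 0 := by
      have h5 : (τ : ℝ) ≤ (T : ℝ) := by exact_mod_cast hτT
      have h6 : (τ : ℝ) / E ≤ (T : ℝ) / E := by gcongr
      linarith
    have h4 : (1 : ℝ) ≤ γ ^ ((τ : ℝ) / E - (T : ℝ) / E - 1) :=
      Real.one_le_rpow_of_pos_of_le_one_of_nonpos hγ0 hγ1.le hexp
    calc |θ τ - θs| ≤ A := h3
      _ ≤ A * γ ^ ((τ : ℝ) / E - (T : ℝ) / E - 1) := le_mul_of_one_le_right hA0.le h4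
  · have hle : T ≤ τ := hτT.le
    set m : ℕ := τ - T with hm
    set k : ℕ := m / C with hk
    have hmk : T + k * C ≤ τ := by
      have h0 : k * C ≤ m := by rw [hk]; exact Nat.div_mul_le_self m C
      have h1 : T + m = τ := by rw [hm]; omega
      omega
    rcases hgeo k with h | h
    · have : θ τ = θs := hzero' _ _ hmk h
      rw [this]
      simp
      positivity
    · have h1 : |θ τ - θs| ≤ η τ / γ := hinv τ hle
      have h2 : η τ ≤ η (T + k * C) := hηanti hmk
      have h3 : η T ≤ η 0 := hηanti (Nat.zero_le T)
      have hγk : (0:ℝ) < γ ^ k := pow_pos hγ0 k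
      have h4 : |θ τ - θs| ≤ η 0 / γ * γ ^ (k : ℝ) := by
        rw [Real.rpow_natCast]
        have h9 : η τ ≤ γ ^ k * η 0 := by
          calc η τ ≤ η (T + k * C) := h2
            _ ≤ γ ^ k * η T := h
            _ ≤ γ ^ k * η 0 := mul_le_mul_of_nonneg_left h3 hγk.le
        have hd2 : η τ / γ ≤ γ ^ k * η 0 / γ := by gcongr
        calc |θ τ - θs| ≤ η τ / γ := h1
          _ ≤ γ ^ k * η 0 / γ := hd2
          _ = η 0 / γ * γ ^ k := by ring
      have hexp : (τ : ℝ) / E - (T : ℝ) / E - 1 ≤ (k : ℝ) := by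
        have e1 : C * k + m % C = m := by rw [hk]; exact Nat.div_add_mod m C
        have e2 : m % C < C := Nat.mod_lt m hCpos
        have hmC : m < (k + 1) * C := by
          calc m = C * k + m % C := e1.symm
            _ < C * k + C := by omega
            _ = (k + 1) * C := by ring
        have hτm : (τ : ℝ) - (T : ℝ) = (m : ℝ) := by
          rw [hm]
          push_cast [Nat.cast_sub hle]
          ring
        have hstep : (m : ℝ) / E ≤ (k : ℝ) + 1 := by
          rw [div_le_iff₀ hE0, ← hCE]
          exact_mod_cast hmC.le
        have heq2 : (τ : ℝ) / E - (T : ℝ) / E = (m : ℝ) / E := by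
          rw [← sub_div, hτm]
        linarith
      have h5 : γ ^ ((τ : ℝ) / E - (T : ℝ) / E - 1) ≥ γ ^ ((k : ℝ)) :=
        Real.rpow_le_rpow_of_exponent_ge hγ0 hγ1.le hexp
      have h6 : 0 ≤ γ ^ ((k : ℝ)) := (Real.rpow_pos_of_pos hγ0 _).le
      have h7 : η 0 / γ ≤ A := by rw [hA]; have h8 : 0 ≤ (T:ℝ) * η 0 := by positivity
                                  have := abs_nonneg (θ 0 - θs); linarith
      calc |θ τ - θs| ≤ η 0 / γ * γ ^ (k : ℝ) := h4
        _ ≤ A * γ ^ ((τ : ℝ) / E - (T : ℝ) / E - 1) :=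
            mul_le_mul h7 h5 h6 hA0.le
end

section
/- (Theorem 1, vector case) Fix q ≥ 1, θ* ∈ ℝ^q, γ ∈ (0,1), a componentwise positive initial step size η₀ ∈ ℝ^q, and θ₀ ∈ ℝ^q. Define sequences θ, η, s : ℕ → ℝ^q componentwise by θ_i(0) = θ₀_i, η_i(0) = η₀_i, s_i(τ) = -sgn(θ_i(τ) - θ*_i), θ_i(τ+1) = θ_i(τ) + s_i(τ)·η_i(τ), and for τ ≥ 1, η_i(τ) = γ·η_i(τ-1) if s_i(τ)·s_i(τ-1) = -1 and η_i(τ) = η_i(τ-1) otherwise. Then there exists α > 0 such that for all τ ≥ 0, ‖θ(τ) - θ*‖₂ ≤ α · γ^{τ/C}, where C = ⌈γ⁻¹⌉ and ‖·‖₂ is the Euclidean norm on ℝ^q. -/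
theorem scalar_sign_bound (γ : ℝ) (hγ0 : 0 < γ) (hγ1 : γ < 1)
    (C : ℕ) (hC : 1 ≤ γ * C)
    (x η : ℕ → ℝ) (hη00 : 0 < η 0)
    (hx : ∀ τ, x (τ + 1) = x τ - Real.sign (x τ) * η τ)
    (hη : ∀ τ, η (τ + 1) =
      if Real.sign (x (τ + 1)) * Real.sign (x τ) = -1 then γ * η τ else η τ) :
    ∃ A : ℝ, 0 < A ∧ ∀ τ, |x τ| ≤ A * γ ^ ((τ : ℝ) / C) := by
  have hC0 : 0 < C := by
    rcases Nat.eq_zero_or_pos C with h | h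
    · exfalso; rw [h] at hC; simp at hC; linarith
    · exact h
  have hCR : (0:ℝ) < (C:ℝ) := by exact_mod_cast hC0
  -- η is always positive
  have hηpos : ∀ τ, 0 < η τ := by
    intro τ; induction τ with
    | zero => exact hη00
    | succ n ih => rw [hη n]; split <;> positivity
  -- η is antitone
  have hηstep : ∀ τ, η (τ + 1) ≤ η τ := by
    intro τ; rw [hη τ]; split
    · nlinarith [hηpos τ]
    · exact le_rfl
  have hηmono : Antitone η := antitone_nat_of_succ_le hηstep
  -- zero is absorbing
  have hzero : ∀ τ, x τ = 0 → ∀ τ', τ ≤ τ' → x τ' = 0 := by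
    intro τ h τ' hle
    induction τ', hle using Nat.le_induction with
    | base => exact h
    | succ n hn ih => rw [hx n, ih, Real.sign_zero]; ring
  -- goodness (γ|x| ≤ η) persists
  have hgood_step : ∀ τ, γ * |x τ| ≤ η τ → γ * |x (τ + 1)| ≤ η (τ + 1) := by
    intro τ hg
    have he := hηpos τ
    have he' := hηpos (τ + 1)
    rcases lt_trichotomy (x τ) 0 with hneg | hz | hpos
    · have hx' : x (τ + 1) = x τ + η τ := by
        rw [hx τ, Real.sign_of_neg hneg]; ring
      rw [abs_of_neg hneg] at hg
      rcases lt_trichotomy (x (τ + 1)) 0 with h1 | h1 | h1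
      · have hsame : η (τ + 1) = η τ := by
          rw [hη τ, if_neg]
          rw [Real.sign_of_neg h1, Real.sign_of_neg hneg]; norm_num
        rw [hsame, abs_of_neg h1, hx']
        nlinarith [mul_pos hγ0 he]
      · rw [h1]; simpa using he'.le
      · have hflip : η (τ + 1) = γ * η τ := by
          rw [hη τ, if_pos]
          rw [Real.sign_of_pos h1, Real.sign_of_neg hneg]; ring
        rw [hflip, abs_of_pos h1, hx']
        nlinarith [mul_neg_of_pos_of_neg hγ0 hneg]
    · have h0 : x (τ + 1) = 0 := by rw [hx τ, hz, Real.sign_zero]; ring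
      rw [h0]; simpa using he'.le
    · have hx' : x (τ + 1) = x τ - η τ := by
        rw [hx τ, Real.sign_of_pos hpos]; ring
      rw [abs_of_pos hpos] at hg
      rcases lt_trichotomy (x (τ + 1)) 0 with h1 | h1 | h1
      · have hflip : η (τ + 1) = γ * η τ := by
          rw [hη τ, if_pos]
          rw [Real.sign_of_neg h1, Real.sign_of_pos hpos]; ring
        rw [hflip, abs_of_neg h1, hx']
        nlinarith [mul_pos hγ0 hpos]
      · rw [h1]; simpa using he'.le
      · have hsame : η (τ + 1) = η τ := by
          rw [hη τ, if_neg]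
          rw [Real.sign_of_pos h1, Real.sign_of_pos hpos]; norm_num
        rw [hsame, abs_of_pos h1, hx']
        nlinarith [mul_pos hγ0 he]
  -- goodness is eventually reached
  have hreach : ∃ T, γ * |x T| ≤ η T := by
    by_contra hcon
    push_neg at hcon
    have key : ∀ τ, η τ = η 0 ∧ |x τ| ≤ |x 0| - τ * η 0 := by
      intro τ; induction τ with
      | zero => simp
      | succ n ih =>
        obtain ⟨ihη, ihx⟩ := ih
        have hb := hcon n
        have he := hηpos n
        have hxne : x n ≠ 0 := by
          intro h; rw [h] at hb; simp at hb; linarith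
        have habsx : η n < |x n| := by
          nlinarith [abs_nonneg (x n), abs_pos.mpr hxne]
        rcases hxne.lt_or_gt with hneg | hpos
        · have hx' : x (n + 1) = x n + η n := by
            rw [hx n, Real.sign_of_neg hneg]; ring
          rw [abs_of_neg hneg] at habsx
          have h1 : x (n + 1) < 0 := by rw [hx']; linarith
          have hsame : η (n + 1) = η n := by
            rw [hη n, if_neg]
            rw [Real.sign_of_neg h1, Real.sign_of_neg hneg]; norm_num
          refine ⟨by rw [hsame, ihη], ?_⟩
          rw [abs_of_neg h1, hx']
          rw [abs_of_neg hneg] at ihx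
          rw [ihη] at *
          push_cast
          linarith
        · have hx' : x (n + 1) = x n - η n := by
            rw [hx n, Real.sign_of_pos hpos]; ring
          rw [abs_of_pos hpos] at habsx
          have h1 : 0 < x (n + 1) := by rw [hx']; linarith
          have hsame : η (n + 1) = η n := by
            rw [hη n, if_neg]
            rw [Real.sign_of_pos h1, Real.sign_of_pos hpos]; norm_num
          refine ⟨by rw [hsame, ihη], ?_⟩
          rw [abs_of_pos h1, hx']
          rw [abs_of_pos hpos] at ihx
          rw [ihη] at *
          push_cast
          linarith
    obtain ⟨N, hN⟩ := exists_nat_gt (|x 0| / η 0)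
    obtain ⟨h1, h2⟩ := key N
    have h3 : |x 0| < N * η 0 := by
      rw [div_lt_iff₀ hη00] at hN; linarith
    linarith [abs_nonneg (x N)]
  -- core: from a good state, within C steps η shrinks or x hits zero
  have core : ∀ σ, γ * |x σ| ≤ η σ →
      η (σ + C) ≤ γ * η σ ∨ ∃ k ≤ C, x (σ + k) = 0 := by
    intro σ hg
    by_cases hz : ∃ k ≤ C, x (σ + k) = 0
    · exact Or.inr hz
    push_neg at hz
    left
    by_contra hcon
    push_neg at hcon
    have hxσ : x σ ≠ 0 := by simpa using hz 0 (Nat.zero_le C)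
    -- sign cannot change in the window
    have hsc : ∀ k, k < C → Real.sign (x (σ + k + 1)) = Real.sign (x (σ + k)) := by
      intro k hk
      by_contra hne
      have hk1 : k + 1 ≤ C := hk
      have hflip : η (σ + k + 1) = γ * η (σ + k) := by
        rw [hη (σ + k), if_pos]
        rcases Real.sign_apply_eq_of_ne_zero _ (hz k hk.le) with h1 | h1 <;>
          rcases Real.sign_apply_eq_of_ne_zero _ (hz (k + 1) hk1) with h2 | h2 <;>
          rw [show σ + (k + 1) = σ + k + 1 from rfl] at h2
        · exact absurd (h2.trans h1.symm) hne
        · rw [h1, h2]; norm_num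
        · rw [h1, h2]; norm_num
        · exact absurd (h2.trans h1.symm) hne
      have hle1 : η (σ + C) ≤ η (σ + k + 1) := hηmono (by omega)
      have hle2 : η (σ + k) ≤ η σ := hηmono (by omega)
      nlinarith [hηpos (σ + k)]
    have hsconst : ∀ k, k ≤ C → Real.sign (x (σ + k)) = Real.sign (x σ) := by
      intro k hk; induction k with
      | zero => rfl
      | succ n ih =>
        rw [show σ + (n + 1) = σ + n + 1 from rfl, hsc n (Nat.lt_of_succ_le hk)]
        exact ih (Nat.le_of_succ_le hk)
    have hηconst : ∀ k, k ≤ C → η (σ + k) = η σ := by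
      intro k hk; induction k with
      | zero => rfl
      | succ n ih =>
        rw [show σ + (n + 1) = σ + n + 1 from rfl,
          hη (σ + n), if_neg, ih (Nat.le_of_succ_le hk)]
        rw [show σ + n + 1 = σ + (n + 1) from rfl,
          hsconst (n + 1) hk, hsconst n (Nat.le_of_succ_le hk)]
        rcases Real.sign_apply_eq_of_ne_zero _ hxσ with h | h <;> rw [h] <;> norm_num
    rcases Real.sign_apply_eq_of_ne_zero _ hxσ with hsgn | hsgn
    · -- sign -1 : x σ < 0
      have hxneg : x σ < 0 := by
        rcases lt_trichotomy (x σ) 0 with h | h | h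
        · exact h
        · exact absurd h hxσ
        · rw [Real.sign_of_pos h] at hsgn; norm_num at hsgn
      have hxval : ∀ k, k ≤ C → x (σ + k) = x σ + k * η σ := by
        intro k hk; induction k with
        | zero => simp
        | succ n ih =>
          rw [show σ + (n + 1) = σ + n + 1 from rfl,
            hx (σ + n), hηconst n (Nat.le_of_succ_le hk),
            hsconst n (Nat.le_of_succ_le hk), hsgn, ih (Nat.le_of_succ_le hk)]
          push_cast; ring
      have hxC := hxval C le_rfl
      have hCneg : x (σ + C) < 0 := by
        have hs := hsconst C le_rfl
        rw [hsgn] at hs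
        rcases lt_trichotomy (x (σ + C)) 0 with h | h | h
        · exact h
        · rw [h, Real.sign_zero] at hs; norm_num at hs
        · rw [Real.sign_of_pos h] at hs; norm_num at hs
      rw [abs_of_neg hxneg] at hg
      have h1 : (C:ℝ) * (γ * -x σ) ≤ (C:ℝ) * η σ :=
        mul_le_mul_of_nonneg_left hg (Nat.cast_nonneg C)
      have h2 : (0:ℝ) ≤ (γ * C - 1) * (-x σ) :=
        mul_nonneg (by linarith) (by linarith)
      nlinarith [hxC, hCneg]
    · -- sign 1 : x σ > 0
      have hxpos : 0 < x σ := by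
        rcases lt_trichotomy (x σ) 0 with h | h | h
        · rw [Real.sign_of_neg h] at hsgn; norm_num at hsgn
        · exact absurd h hxσ
        · exact h
      have hxval : ∀ k, k ≤ C → x (σ + k) = x σ - k * η σ := by
        intro k hk; induction k with
        | zero => simp
        | succ n ih =>
          rw [show σ + (n + 1) = σ + n + 1 from rfl,
            hx (σ + n), hηconst n (Nat.le_of_succ_le hk),
            hsconst n (Nat.le_of_succ_le hk), hsgn, ih (Nat.le_of_succ_le hk)]
          push_cast; ring
      have hxC := hxval C le_rfl
      have hCpos' : 0 < x (σ + C) := by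
        have hs := hsconst C le_rfl
        rw [hsgn] at hs
        rcases lt_trichotomy (x (σ + C)) 0 with h | h | h
        · rw [Real.sign_of_neg h] at hs; norm_num at hs
        · rw [h, Real.sign_zero] at hs; norm_num at hs
        · exact h
      rw [abs_of_pos hxpos] at hg
      have h1 : (C:ℝ) * (γ * x σ) ≤ (C:ℝ) * η σ :=
        mul_le_mul_of_nonneg_left hg (Nat.cast_nonneg C)
      have h2 : (0:ℝ) ≤ (γ * C - 1) * x σ :=
        mul_nonneg (by linarith) (by linarith)
      nlinarith [hxC, hCpos']
  -- assemble
  obtain ⟨T, hT⟩ := hreach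
  have hgoodall : ∀ m, γ * |x (T + m)| ≤ η (T + m) := by
    intro m; induction m with
    | zero => exact hT
    | succ n ih => exact hgood_step _ ih
  have hdecay : ∀ n, η (T + n * C) ≤ η T * γ ^ n ∨ ∃ k ≤ n * C, x (T + k) = 0 := by
    intro n; induction n with
    | zero => left; simp
    | succ n ih =>
      rcases ih with ih | ⟨k, hk, hxk⟩
      · rcases core (T + n * C) (hgoodall (n * C)) with h | ⟨k, hk, hxk⟩
        · left
          have heq : T + (n + 1) * C = T + n * C + C := by ring
          rw [heq]
          calc η (T + n * C + C) ≤ γ * η (T + n * C) := h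
            _ ≤ γ * (η T * γ ^ n) := mul_le_mul_of_nonneg_left ih hγ0.le
            _ = η T * γ ^ (n + 1) := by ring
        · right
          refine ⟨n * C + k, by rw [Nat.succ_mul]; omega, ?_⟩
          rwa [show T + (n * C + k) = T + n * C + k from (Nat.add_assoc T (n * C) k).symm]
      · right
        exact ⟨k, le_trans hk (by rw [Nat.succ_mul]; omega), hxk⟩
  -- bound for τ ≥ T
  have hbound : ∀ m, γ * |x (T + m)| ≤ η T * γ ^ (m / C) := by
    intro m
    rcases hdecay (m / C) with h | ⟨k, hk, hxk⟩
    · have h1 := hgoodall m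
      have h2 : η (T + m) ≤ η (T + m / C * C) :=
        hηmono (Nat.add_le_add_left (Nat.div_mul_le_self m C) T)
      linarith
    · have hx0 : x (T + m) = 0 := hzero _ hxk _
        (Nat.add_le_add_left (le_trans hk (Nat.div_mul_le_self m C)) T)
      rw [hx0]
      simp only [abs_zero, mul_zero]
      exact mul_nonneg (hηpos T).le (pow_nonneg hγ0.le _)
  set K0 : ℝ := γ ^ (-(T : ℝ) / C - 1) with hK0
  have hK0pos : 0 < K0 := Real.rpow_pos_of_pos hγ0 _
  set S : ℝ := ∑ j ∈ Finset.range (T + 1), |x j| with hS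
  have hSnonneg : 0 ≤ S := Finset.sum_nonneg fun j _ => abs_nonneg _
  have hA1 : 0 < η T / γ * K0 := mul_pos (div_pos (hηpos T) hγ0) hK0pos
  have hA2 : (0:ℝ) ≤ S * γ ^ (-(T : ℝ) / C) :=
    mul_nonneg hSnonneg (Real.rpow_pos_of_pos hγ0 _).le
  refine ⟨η T / γ * K0 + S * γ ^ (-(T : ℝ) / C) + 1, by linarith, ?_⟩
  intro τ
  have hgpos : (0:ℝ) < γ ^ ((τ : ℝ) / C) := Real.rpow_pos_of_pos hγ0 _
  rcases le_or_gt τ T with hle | hlt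
  · -- early phase
    have h1 : |x τ| ≤ S :=
      Finset.single_le_sum (fun j _ => abs_nonneg (x j))
        (Finset.mem_range.mpr (by omega))
    have h2 : γ ^ ((T : ℝ) / C) ≤ γ ^ ((τ : ℝ) / C) :=
      Real.rpow_le_rpow_of_exponent_ge hγ0 hγ1.le
        (by have hc : (τ:ℝ) ≤ (T:ℝ) := by exact_mod_cast hle
            gcongr)
    have h3 : S * γ ^ (-(T : ℝ) / C) * γ ^ ((T : ℝ) / C) = S := by
      rw [mul_assoc, ← Real.rpow_add hγ0, neg_div, neg_add_cancel,
        Real.rpow_zero, mul_one]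
    calc |x τ| ≤ S := h1
      _ = S * γ ^ (-(T : ℝ) / C) * γ ^ ((T : ℝ) / C) := h3.symm
      _ ≤ S * γ ^ (-(T : ℝ) / C) * γ ^ ((τ : ℝ) / C) :=
          mul_le_mul_of_nonneg_left h2 hA2
      _ ≤ (η T / γ * K0 + S * γ ^ (-(T : ℝ) / C) + 1) * γ ^ ((τ : ℝ) / C) := by
          apply mul_le_mul_of_nonneg_right _ hgpos.le
          linarith
  · -- late phase
    set m : ℕ := τ - T with hm
    have hτ : τ = T + m := by omega
    have h1 := hbound m
    set n : ℕ := m / C with hn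
    have h2 : |x τ| ≤ η T / γ * γ ^ n := by
      rw [hτ, div_mul_eq_mul_div, le_div_iff₀ hγ0]
      linarith
    have h3 : (γ:ℝ) ^ n = γ ^ ((n : ℝ)) := (Real.rpow_natCast γ n).symm
    have h4 : ((m : ℝ)) / C - 1 ≤ (n : ℝ) := by
      have := Nat.lt_mul_div_succ m hC0
      have hcast : (m : ℝ) < (C : ℝ) * ((n : ℝ) + 1) := by exact_mod_cast this
      have hlt2 : (m : ℝ) / C < (n : ℝ) + 1 := by
        rw [div_lt_iff₀ hCR]
        nlinarith
      linarith
    have h5 : γ ^ ((n:ℝ)) ≤ γ ^ ((m : ℝ) / C - 1) :=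
      Real.rpow_le_rpow_of_exponent_ge hγ0 hγ1.le h4
    have h6 : γ ^ ((m : ℝ) / C - 1) = K0 * γ ^ ((τ : ℝ) / C) := by
      rw [hK0, ← Real.rpow_add hγ0]
      congr 1
      have : (m : ℝ) = (τ : ℝ) - T := by
        rw [hm]; push_cast [Nat.cast_sub hlt.le]; ring
      rw [this]; ring
    have h7 : |x τ| ≤ η T / γ * K0 * γ ^ ((τ : ℝ) / C) := by
      calc |x τ| ≤ η T / γ * γ ^ n := h2
        _ = η T / γ * γ ^ ((n:ℝ)) := by rw [h3]
        _ ≤ η T / γ * γ ^ ((m : ℝ) / C - 1) :=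
            mul_le_mul_of_nonneg_left h5 (div_pos (hηpos T) hγ0).le
        _ = η T / γ * K0 * γ ^ ((τ : ℝ) / C) := by rw [h6]; ring
    calc |x τ| ≤ η T / γ * K0 * γ ^ ((τ : ℝ) / C) := h7
      _ ≤ (η T / γ * K0 + S * γ ^ (-(T : ℝ) / C) + 1) * γ ^ ((τ : ℝ) / C) := by
          apply mul_le_mul_of_nonneg_right _ hgpos.le
          linarith

open Classical in
/-- Theorem 1, vector case: componentwise scalar sign dynamics in `ℝ^q`
converge exponentially in the Euclidean norm: `‖θ(τ) - θ*‖₂ ≤ α·γ^{τ/C}`, `C = ⌈γ⁻¹⌉`. -/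
theorem exponential_convergence_vector
    (q : ℕ) (hq : 1 ≤ q)
    (θs θ0 : EuclideanSpace ℝ (Fin q)) (η0 : Fin q → ℝ)
    (γ : ℝ) (hγ0 : 0 < γ) (hγ1 : γ < 1) (hη0 : ∀ i, 0 < η0 i)
    (θ : ℕ → EuclideanSpace ℝ (Fin q)) (η s : ℕ → Fin q → ℝ)
    (hθinit : θ 0 = θ0) (hηinit : η 0 = η0)
    (hs : ∀ τ i, s τ i = -Real.sign (θ τ i - θs i))
    (hθrec : ∀ τ i, θ (τ + 1) i = θ τ i + s τ i * η τ i)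
    (hηrec : ∀ τ i, η (τ + 1) i = if s (τ + 1) i * s τ i = -1 then γ * η τ i else η τ i) :
    ∃ α : ℝ, 0 < α ∧
      ∀ τ : ℕ, ‖θ τ - θs‖ ≤ α * γ ^ ((τ : ℝ) / ((⌈γ⁻¹⌉ : ℤ) : ℝ)) := by
  classical
  set C : ℕ := (⌈γ⁻¹⌉ : ℤ).toNat with hCdef
  have hceil_pos : (0:ℤ) < ⌈γ⁻¹⌉ := Int.ceil_pos.mpr (by positivity)
  have hCcast : ((C : ℕ) : ℝ) = ((⌈γ⁻¹⌉ : ℤ) : ℝ) := by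
    rw [hCdef]
    exact_mod_cast congrArg (Int.cast : ℤ → ℝ) (Int.toNat_of_nonneg hceil_pos.le)
  have hC : 1 ≤ γ * C := by
    have h1 : γ⁻¹ ≤ ((⌈γ⁻¹⌉ : ℤ) : ℝ) := Int.le_ceil _
    rw [hCcast]
    calc (1:ℝ) = γ * γ⁻¹ := by field_simp
      _ ≤ γ * ((⌈γ⁻¹⌉ : ℤ) : ℝ) := mul_le_mul_of_nonneg_left h1 hγ0.le
  -- componentwise application of the scalar bound
  have hcomp : ∀ i : Fin q, ∃ A : ℝ, 0 < A ∧
      ∀ τ, |θ τ i - θs i| ≤ A * γ ^ ((τ : ℝ) / C) := by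
    intro i
    refine scalar_sign_bound γ hγ0 hγ1 C hC (fun τ => θ τ i - θs i) (fun τ => η τ i)
      (by beta_reduce; rw [hηinit]; exact hη0 i) (fun τ => ?_) (fun τ => ?_)
    · beta_reduce
      rw [hθrec τ i, hs τ i]; ring
    · beta_reduce
      rw [hηrec τ i, hs (τ + 1) i, hs τ i, neg_mul_neg]
  choose A hApos hA using hcomp
  set α : ℝ := ∑ i : Fin q, A i with hα
  have hNe : Nonempty (Fin q) := ⟨⟨0, hq⟩⟩
  have hαpos : 0 < α :=
    Finset.sum_pos (fun i _ => hApos i) Finset.univ_nonempty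
  refine ⟨α, hαpos, ?_⟩
  intro τ
  rw [← hCcast]
  set g : ℝ := γ ^ ((τ : ℝ) / C) with hg
  have hgpos : 0 < g := Real.rpow_pos_of_pos hγ0 _
  have hAle : ∀ i, A i ≤ α := fun i =>
    Finset.single_le_sum (fun j _ => (hApos j).le) (Finset.mem_univ i)
  have hsq : ∑ i : Fin q, ‖(θ τ - θs) i‖ ^ 2 ≤ (α * g) ^ 2 := by
    calc ∑ i : Fin q, ‖(θ τ - θs) i‖ ^ 2
        ≤ ∑ i : Fin q, (A i * g) * (α * g) := by
          apply Finset.sum_le_sum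
          intro i _
          have hb : ‖(θ τ - θs) i‖ ≤ A i * g := by
            rw [show (θ τ - θs) i = θ τ i - θs i from rfl, Real.norm_eq_abs]
            exact hA i τ
          have hb2 : A i * g ≤ α * g := mul_le_mul_of_nonneg_right (hAle i) hgpos.le
          calc ‖(θ τ - θs) i‖ ^ 2 ≤ (A i * g) ^ 2 :=
                pow_le_pow_left₀ (norm_nonneg _) hb 2
            _ = (A i * g) * (A i * g) := sq (A i * g) ▸ rfl
            _ ≤ (A i * g) * (α * g) :=
                mul_le_mul_of_nonneg_left hb2 (mul_nonneg (hApos i).le hgpos.le)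
      _ = (∑ i : Fin q, A i) * g * (α * g) := by rw [← Finset.sum_mul, ← Finset.sum_mul]
      _ = (α * g) ^ 2 := by rw [← hα]; ring
  calc ‖θ τ - θs‖ = Real.sqrt (∑ i : Fin q, ‖(θ τ - θs) i‖ ^ 2) :=
        EuclideanSpace.norm_eq _
    _ ≤ Real.sqrt ((α * g) ^ 2) := Real.sqrt_le_sqrt hsq
    _ = α * g := Real.sqrt_sq (mul_nonneg hαpos.le hgpos.le)
end

section
/- (Theorem 2, qualitative part) Under the scalar tolerance dynamics, the personalization loop reaches the acceptance region in finite time: there exists τ* < ∞ such that |θ(τ*) - θ*| ≤ ε, and θ(τ) = θ(τ*) with s(τ) = 0 for all τ ≥ τ*. -/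
open Classical in
/-- Theorem 2, qualitative part: the scalar tolerance dynamics reach the
acceptance region in finite time, after which the parameter is constant and prompts vanish. -/
theorem finite_time_convergence_qualitative
    (θs ε γ η0 θ0 : ℝ) (hε : 0 < ε) (hγ0 : 0 < γ) (hγ1 : γ < 1) (hη0 : 0 < η0)
    (θ η s : ℕ → ℝ)
    (hθinit : θ 0 = θ0) (hηinit : η 0 = η0)
    (hs : ∀ τ, s τ = if ε < |θ τ - θs| then -Real.sign (θ τ - θs) else 0)
    (hθrec : ∀ τ, θ (τ + 1) = θ τ + s τ * η τ)
    (hηrec : ∀ τ, η (τ + 1) = if s (τ + 1) * s τ = -1 then γ * η τ else η τ) :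
    ∃ τstar : ℕ, |θ τstar - θs| ≤ ε ∧
      ∀ τ : ℕ, τstar ≤ τ → θ τ = θ τstar ∧ s τ = 0 := by
  -- η is always positive
  have hηpos : ∀ τ, 0 < η τ := by
    intro τ
    induction τ with
    | zero => rw [hηinit]; exact hη0
    | succ n ih =>
      rw [hηrec n]
      split
      · positivity
      · exact ih
  -- η is nonincreasing
  have hηstep : ∀ τ, η (τ + 1) ≤ η τ := by
    intro τ
    rw [hηrec τ]
    split
    · nlinarith [hηpos τ]
    · exact le_refl _
  have hηmono : ∀ a b : ℕ, a ≤ b → η b ≤ η a := by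
    intro a b hab
    induction b with
    | zero =>
      have : a = 0 := Nat.le_zero.mp hab
      exact le_of_eq (congrArg η this.symm)
    | succ n ih =>
      rcases Nat.lt_or_ge a (n + 1) with h | h
      · exact le_trans (hηstep n) (ih (by omega))
      · have : a = n + 1 := by omega
        exact le_of_eq (congrArg η this.symm)
  -- main part: the region is reached in finite time
  have key : ∃ τ, |θ τ - θs| ≤ ε := by
    by_contra Hc
    push_neg at Hc
    -- Hc : ∀ τ, ε < |θ τ - θs|
    have hs' : ∀ τ, s τ = -Real.sign (θ τ - θs) := by
      intro τ; rw [hs τ, if_pos (Hc τ)]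
    have hxrec : ∀ τ, θ (τ + 1) - θs = (θ τ - θs) - Real.sign (θ τ - θs) * η τ := by
      intro τ; rw [hθrec τ, hs' τ]; ring
    -- one-step dichotomy: either no crossing (distance shrinks by η), or crossing (η shrinks by γ)
    have step : ∀ τ,
        (η τ < |θ τ - θs| ∧ |θ (τ + 1) - θs| = |θ τ - θs| - η τ ∧ η (τ + 1) = η τ) ∨
        (|θ τ - θs| < η τ ∧ |θ (τ + 1) - θs| = η τ - |θ τ - θs| ∧ η (τ + 1) = γ * η τ) := by
      intro τ
      have hxne : θ τ - θs ≠ 0 := by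
        intro h
        have := Hc τ
        rw [h, abs_zero] at this
        linarith
      have hηp := hηpos τ
      rcases hxne.lt_or_gt with hneg | hpos
      · -- x < 0 : sign = -1, x' = x + η
        have hsg : Real.sign (θ τ - θs) = -1 := Real.sign_of_neg hneg
        have hx' : θ (τ + 1) - θs = (θ τ - θs) + η τ := by
          rw [hxrec τ, hsg]; ring
        have habs : |θ τ - θs| = -(θ τ - θs) := abs_of_neg hneg
        rcases lt_trichotomy (η τ) (|θ τ - θs|) with h1 | h1 | h1
        · -- no crossing: x' still negative
          left
          have hx'neg : θ (τ + 1) - θs < 0 := by rw [hx']; linarith [habs ▸ h1]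
          refine ⟨h1, ?_, ?_⟩
          · rw [abs_of_neg hx'neg, hx', habs]; ring
          · rw [hηrec τ]
            rw [if_neg]
            rw [hs' (τ + 1), hs' τ, hsg, Real.sign_of_neg hx'neg]
            norm_num
        · -- exact hit: x' = 0, contradicts Hc
          exfalso
          have h0 : θ (τ + 1) - θs = 0 := by rw [hx']; linarith [habs ▸ h1.symm]
          have h2 := Hc (τ + 1)
          rw [h0, abs_zero] at h2
          linarith
        · -- crossing: x' positive
          right
          have hx'pos : 0 < θ (τ + 1) - θs := by rw [hx']; linarith [habs ▸ h1]
          refine ⟨h1, ?_, ?_⟩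
          · rw [abs_of_pos hx'pos, hx', habs]; ring
          · rw [hηrec τ]
            rw [if_pos]
            rw [hs' (τ + 1), hs' τ, hsg, Real.sign_of_pos hx'pos]
            norm_num
      · -- x > 0 : sign = 1, x' = x - η
        have hsg : Real.sign (θ τ - θs) = 1 := Real.sign_of_pos hpos
        have hx' : θ (τ + 1) - θs = (θ τ - θs) - η τ := by
          rw [hxrec τ, hsg]; ring
        have habs : |θ τ - θs| = θ τ - θs := abs_of_pos hpos
        rcases lt_trichotomy (η τ) (|θ τ - θs|) with h1 | h1 | h1
        · left
          have hx'pos : 0 < θ (τ + 1) - θs := by rw [hx']; linarith [habs ▸ h1]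
          refine ⟨h1, ?_, ?_⟩
          · rw [abs_of_pos hx'pos, hx', habs]
          · rw [hηrec τ]
            rw [if_neg]
            rw [hs' (τ + 1), hs' τ, hsg, Real.sign_of_pos hx'pos]
            norm_num
        · exfalso
          have : θ (τ + 1) - θs = 0 := by rw [hx']; linarith [habs ▸ h1.symm]
          have h2 := Hc (τ + 1)
          rw [this, abs_zero] at h2
          linarith
        · right
          have hx'neg : θ (τ + 1) - θs < 0 := by rw [hx']; linarith [habs ▸ h1]
          refine ⟨h1, ?_, ?_⟩
          · rw [abs_of_neg hx'neg, hx', habs]; ring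
          · rw [hηrec τ]
            rw [if_pos]
            rw [hs' (τ + 1), hs' τ, hsg, Real.sign_of_neg hx'neg]
            norm_num
    -- a crossing happens after any time
    have flip : ∀ τ0 : ℕ, ∃ τ1, τ0 ≤ τ1 ∧ |θ τ1 - θs| < η τ1 := by
      intro τ0
      by_contra hcf
      push_neg at hcf
      -- hcf : ∀ τ1, τ0 ≤ τ1 → η τ1 ≤ |θ τ1 - θs|
      have chain : ∀ k : ℕ, η (τ0 + k) = η τ0 ∧
          |θ (τ0 + k) - θs| = |θ τ0 - θs| - k * η τ0 := by
        intro k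
        induction k with
        | zero => simp
        | succ n ih =>
          rcases step (τ0 + n) with ⟨h1, h2, h3⟩ | ⟨h1, _, _⟩
          · constructor
            · rw [show τ0 + (n + 1) = τ0 + n + 1 from rfl, h3, ih.1]
            · rw [show τ0 + (n + 1) = τ0 + n + 1 from rfl, h2, ih.1, ih.2]
              push_cast; ring
          · exact absurd h1 (not_lt.mpr (hcf (τ0 + n) (by omega)))
      obtain ⟨k, hk⟩ := exists_nat_gt (|θ τ0 - θs| / η τ0)
      have h2 := (chain k).2
      have h3 : (0 : ℝ) ≤ |θ (τ0 + k) - θs| := abs_nonneg _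
      have h4 : |θ τ0 - θs| < k * η τ0 := (div_lt_iff₀ (hηpos τ0)).mp hk
      linarith
    -- geometric decay: after n crossings, η ≤ γ^(n+1) η0 and distance ≤ γ^n η0
    have C : ∀ n : ℕ, ∃ τ, η τ ≤ γ ^ (n + 1) * η0 ∧ |θ τ - θs| ≤ γ ^ n * η0 := by
      intro n
      induction n with
      | zero =>
        obtain ⟨τ1, _, hf⟩ := flip 0
        rcases step τ1 with ⟨h1, _, _⟩ | ⟨h1, h2, h3⟩
        · exact absurd hf (not_lt.mpr h1.le)
        · have hb : η τ1 ≤ η0 := by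
            have := hηmono 0 τ1 (Nat.zero_le _)
            rwa [hηinit] at this
          refine ⟨τ1 + 1, ?_, ?_⟩
          · rw [h3, pow_one]; nlinarith
          · rw [h2, pow_zero, one_mul]
            have := abs_nonneg (θ τ1 - θs)
            linarith
      | succ n ih =>
        obtain ⟨τ, hτη, _⟩ := ih
        obtain ⟨τ1, hle, hf⟩ := flip τ
        have hmono : η τ1 ≤ η τ := hηmono τ τ1 hle
        rcases step τ1 with ⟨h1, _, _⟩ | ⟨h1, h2, h3⟩
        · exact absurd hf (not_lt.mpr h1.le)
        · refine ⟨τ1 + 1, ?_, ?_⟩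
          · rw [h3, show n + 1 + 1 = (n + 1) + 1 from rfl, pow_succ]
            nlinarith
          · rw [h2]
            have := abs_nonneg (θ τ1 - θs)
            calc η τ1 - |θ τ1 - θs| ≤ η τ1 := by linarith
              _ ≤ η τ := hmono
              _ ≤ γ ^ (n + 1) * η0 := hτη
      -- choose n with γ^n η0 < ε
    obtain ⟨n, hn⟩ := exists_pow_lt_of_lt_one (show (0:ℝ) < ε / η0 by positivity) hγ1
    obtain ⟨τ, _, hd⟩ := C n
    have : γ ^ n * η0 < ε := (lt_div_iff₀ hη0).mp hn
    exact absurd (Hc τ) (not_lt.mpr (le_of_lt (lt_of_le_of_lt hd this)))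
  -- conclusion: once inside, stay inside with zero prompts
  obtain ⟨τstar, hτ⟩ := key
  refine ⟨τstar, hτ, ?_⟩
  have hstop : s τstar = 0 := by rw [hs τstar, if_neg (not_lt.mpr hτ)]
  intro τ hle
  induction τ, hle using Nat.le_induction with
  | base => exact ⟨rfl, hstop⟩
  | succ n hn ih =>
    have hθn : θ (n + 1) = θ τstar := by
      rw [hθrec n, ih.2, ih.1]; ring
    refine ⟨hθn, ?_⟩
    rw [hs (n + 1), hθn, if_neg (not_lt.mpr hτ)]
end

section
/- Under the scalar tolerance dynamics, the total number of flips is finite and bounded by 1 + max(0, ⌈log(ε/η₀)/log γ⌉); that is, if after μ flips the updated step size satisfies γ^{μ-1}·η₀ ≤ ε, then no further flip can occur, because the error after the μ-th flip already lies in the acceptance region. -/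
open Classical in
/-- Under the scalar tolerance dynamics, the total number of flips is finite
and bounded by `1 + max(0, ⌈log(ε/η₀)/log γ⌉)`. -/
theorem flips_finite_and_bounded
    (θs ε γ η0 θ0 : ℝ) (hε : 0 < ε) (hγ0 : 0 < γ) (hγ1 : γ < 1) (hη0 : 0 < η0)
    (θ η s : ℕ → ℝ)
    (hθinit : θ 0 = θ0) (hηinit : η 0 = η0)
    (hs : ∀ τ, s τ = if ε < |θ τ - θs| then -Real.sign (θ τ - θs) else 0)
    (hθrec : ∀ τ, θ (τ + 1) = θ τ + s τ * η τ)
    (hηrec : ∀ τ, η (τ + 1) = if s (τ + 1) * s τ = -1 then γ * η τ else η τ) :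
    {τ : ℕ | 1 ≤ τ ∧ s τ * s (τ - 1) = -1}.Finite ∧
    ({τ : ℕ | 1 ≤ τ ∧ s τ * s (τ - 1) = -1}.ncard : ℤ) ≤
      1 + max 0 ⌈Real.log (ε / η0) / Real.log γ⌉ := by
  classical
  set x := Real.log (ε / η0) / Real.log γ with hxdef
  -- possible values of s
  have hsval : ∀ n, s n = 1 ∨ s n = -1 ∨ s n = 0 := by
    intro n
    rw [hs n]
    split_ifs with hc
    · rcases lt_trichotomy (θ n - θs) 0 with h | h | h
      · left; rw [Real.sign_of_neg h]; norm_num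
      · right; right; rw [h, Real.sign_zero]; norm_num
      · right; left; rw [Real.sign_of_pos h]
    · right; right; rfl
  have hspos : ∀ n, s n = 1 → θ n - θs < -ε := by
    intro n h
    rw [hs n] at h
    split_ifs at h with hc
    · rcases lt_trichotomy (θ n - θs) 0 with h' | h' | h'
      · rw [abs_of_neg h'] at hc; linarith
      · rw [h', Real.sign_zero] at h; norm_num at h
      · rw [Real.sign_of_pos h'] at h; norm_num at h
    · norm_num at h
  have hsneg : ∀ n, s n = -1 → ε < θ n - θs := by
    intro n h
    rw [hs n] at h
    split_ifs at h with hc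
    · rcases lt_trichotomy (θ n - θs) 0 with h' | h' | h'
      · rw [Real.sign_of_neg h'] at h; norm_num at h
      · rw [h', Real.sign_zero] at h; norm_num at h
      · rw [abs_of_pos h'] at hc; linarith
    · norm_num at h
  -- at a flip, the previous step size exceeds ε
  have hflip : ∀ n, s (n + 1) * s n = -1 → ε < η n := by
    intro n hprod
    have hθ := hθrec n
    rcases hsval n with h1 | h1 | h1 <;> rcases hsval (n + 1) with h2 | h2 | h2 <;>
      rw [h1, h2] at hprod <;> norm_num at hprod
    · -- s n = 1, s (n+1) = -1
      have ha := hspos n h1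
      have hb := hsneg (n + 1) h2
      rw [h1] at hθ
      linarith [hb, ha]
    · -- s n = -1, s (n+1) = 1
      have ha := hsneg n h1
      have hb := hspos (n + 1) h2
      rw [h1] at hθ
      linarith [hb, ha]
  -- flip counter
  set c : ℕ → ℕ := fun T => ((Finset.Icc 1 T).filter (fun i => s i * s (i - 1) = -1)).card
    with hcdef
  have hc0 : c 0 = 0 := by
    simp [hcdef, Finset.Icc_eq_empty (by omega : ¬ (1:ℕ) ≤ 0)]
  have hcsucc : ∀ T, c (T + 1) = if s (T + 1) * s T = -1 then c T + 1 else c T := by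
    intro T
    have hins : Finset.Icc 1 (T + 1) = insert (T + 1) (Finset.Icc 1 T) := by
      ext i; simp [Finset.mem_Icc, Finset.mem_insert]; omega
    have hnm : (T + 1) ∉ (Finset.Icc 1 T).filter (fun i => s i * s (i - 1) = -1) := by
      simp [Finset.mem_filter, Finset.mem_Icc]
    simp only [hcdef, hins, Finset.filter_insert]
    have hsub : (T + 1) - 1 = T := by omega
    rw [hsub]
    split_ifs with h
    · rw [Finset.card_insert_of_notMem hnm]
    · rfl
  have hη : ∀ T, η T = γ ^ c T * η0 := by
    intro T
    induction T with
    | zero => rw [hc0, hηinit]; simp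
    | succ T ih =>
      rw [hηrec T, hcsucc T]
      split_ifs with h
      · rw [ih, pow_succ]; ring
      · exact ih
  have hlogγ : Real.log γ < 0 := Real.log_neg hγ0 hγ1
  -- the counter is bounded
  have hbound : ∀ T, (c T : ℤ) ≤ max 0 ⌈x⌉ := by
    intro T
    induction T with
    | zero => rw [hc0]; exact_mod_cast le_max_left _ _
    | succ T ih =>
      rw [hcsucc T]
      split_ifs with h
      · have hε' : ε < η T := hflip T h
        rw [hη T] at hε'
        have h1 : ε / η0 < γ ^ c T := (div_lt_iff₀ hη0).2 hε'
        have h2 : Real.log (ε / η0) < (c T : ℝ) * Real.log γ := by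
          calc Real.log (ε / η0) < Real.log (γ ^ c T) :=
                Real.log_lt_log (div_pos hε hη0) h1
            _ = (c T : ℝ) * Real.log γ := by rw [Real.log_pow]
        have h3 : (c T : ℝ) < x := (lt_div_iff_of_neg hlogγ).2 h2
        have h4 : (c T : ℤ) < ⌈x⌉ := Int.lt_ceil.2 (by exact_mod_cast h3)
        have h5 : (⌈x⌉ : ℤ) ≤ max 0 ⌈x⌉ := le_max_right _ _
        push_cast
        omega
      · exact ih
  -- every finite subset of the flip set has bounded cardinality
  have hG : ∀ G : Finset ℕ, (↑G ⊆ {τ : ℕ | 1 ≤ τ ∧ s τ * s (τ - 1) = -1}) →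
      (G.card : ℤ) ≤ max 0 ⌈x⌉ := by
    intro G hGsub
    rcases G.eq_empty_or_nonempty with rfl | hne
    · simpa using (le_max_left 0 ⌈x⌉)
    · set T := G.max' hne with hT
      have hsubset : G ⊆ (Finset.Icc 1 T).filter (fun i => s i * s (i - 1) = -1) := by
        intro i hi
        have hin := hGsub hi
        simp only [Set.mem_setOf_eq] at hin
        exact Finset.mem_filter.2 ⟨Finset.mem_Icc.2 ⟨hin.1, G.le_max' i hi⟩, hin.2⟩
      calc (G.card : ℤ) ≤ (c T : ℤ) := Nat.cast_le.2 (Finset.card_le_card hsubset)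
        _ ≤ max 0 ⌈x⌉ := hbound T
  have hfin : {τ : ℕ | 1 ≤ τ ∧ s τ * s (τ - 1) = -1}.Finite := by
    by_contra hinf
    obtain ⟨G, hGsub, hGcard⟩ :=
      Set.Infinite.exists_subset_card_eq hinf ((max 0 ⌈x⌉).toNat + 1)
    have hb := hG G hGsub
    rw [hGcard] at hb
    have hnn : (0 : ℤ) ≤ max 0 ⌈x⌉ := le_max_left _ _
    push_cast at hb
    omega
  refine ⟨hfin, ?_⟩
  have hcard := hG hfin.toFinset (by simp)
  have hncard : {τ : ℕ | 1 ≤ τ ∧ s τ * s (τ - 1) = -1}.ncard = hfin.toFinset.card := by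
    exact Set.ncard_eq_toFinset_card _ hfin
  rw [hncard]
  have hnn : (0 : ℤ) ≤ max 0 ⌈x⌉ := le_max_left _ _
  omega
end

section
/- (Theorem 2, quantitative part) Under the scalar tolerance dynamics, there exists τ* with |θ(τ*) - θ*| ≤ ε and θ(τ) = θ(τ*) for all τ ≥ τ*, satisfying the explicit bound τ* ≤ ⌈|θ₀ - θ*|/η₀⌉ + ⌈γ⁻¹⌉ · (1 + max(0, ⌈log(ε/η₀)/log γ⌉)). -/
/-- Sign bookkeeping: if `σ = ±1` and `σ * x > 0` then `sign x = σ` and `|x| = σ * x`. -/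
private lemma tol_sign_helper (σ x : ℝ) (hσ : σ = 1 ∨ σ = -1) (hx : 0 < σ * x) :
    Real.sign x = σ ∧ |x| = σ * x := by
  rcases hσ with rfl | rfl
  · have h : 0 < x := by linarith
    exact ⟨Real.sign_of_pos h, by rw [abs_of_pos h, one_mul]⟩
  · have h : x < 0 := by linarith
    exact ⟨Real.sign_of_neg h, by rw [abs_of_neg h]; ring⟩

/-- Once inside the tolerance band, the dynamics freeze. -/
private lemma tol_absorbed (θs ε : ℝ) (θ η s : ℕ → ℝ)
    (hs : ∀ τ, s τ = if ε < |θ τ - θs| then -Real.sign (θ τ - θs) else 0)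
    (hθrec : ∀ τ, θ (τ + 1) = θ τ + s τ * η τ)
    (t : ℕ) (h : |θ t - θs| ≤ ε) : ∀ k, θ (t + k) = θ t := by
  intro k
  induction k with
  | zero => rfl
  | succ k ih =>
    have hsz : s (t + k) = 0 := by
      rw [hs, if_neg]
      rw [ih]
      exact not_lt.mpr h
    have e : t + (k + 1) = (t + k) + 1 := by omega
    rw [e, hθrec, hsz, zero_mul, add_zero, ih]

/-- Within a phase (constant step size, constant direction), within `n` steps we either
enter the band or flip with small overshoot and shrunken step size. -/
private lemma tol_phase (θs ε γ : ℝ) (θ η s : ℕ → ℝ) (hε : 0 < ε)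
    (hs : ∀ τ, s τ = if ε < |θ τ - θs| then -Real.sign (θ τ - θs) else 0)
    (hθrec : ∀ τ, θ (τ + 1) = θ τ + s τ * η τ)
    (hηrec : ∀ τ, η (τ + 1) = if s (τ + 1) * s τ = -1 then γ * η τ else η τ)
    (σ : ℝ) (hσ : σ = 1 ∨ σ = -1) :
    ∀ (n t : ℕ), ε < σ * (θ t - θs) → σ * (θ t - θs) - ε ≤ (n : ℝ) * η t → 0 < η t →
      ∃ k, 1 ≤ k ∧ k ≤ n ∧
        (|θ (t + k) - θs| ≤ ε ∨
          (ε < -σ * (θ (t + k) - θs) ∧ -σ * (θ (t + k) - θs) < η t - ε ∧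
            η (t + k) = γ * η t)) := by
  have hσσ : σ * σ = 1 := by rcases hσ with rfl | rfl <;> norm_num
  intro n
  induction n with
  | zero =>
    intro t hd hb hη
    simp only [Nat.cast_zero, zero_mul] at hb
    linarith
  | succ n ih =>
    intro t hd hb hη
    obtain ⟨hsg, habs⟩ := tol_sign_helper σ (θ t - θs) hσ (by linarith)
    have hst : s t = -σ := by
      rw [hs t, if_pos (by rw [habs]; exact hd), hsg]
    have hθ1 : θ (t + 1) - θs = (θ t - θs) - σ * η t := by
      rw [hθrec t, hst]; ring
    have hy : σ * (θ (t + 1) - θs) = σ * (θ t - θs) - η t := by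
      rw [hθ1]; linear_combination (-(η t)) * hσσ
    by_cases hin : |θ (t + 1) - θs| ≤ ε
    · exact ⟨1, le_refl 1, by omega, Or.inl hin⟩
    push_neg at hin
    rcases lt_trichotomy (σ * (θ (t + 1) - θs)) 0 with hneg | hzero | hpos
    · -- flip: the new value is on the other side
      have hσ' : -σ = 1 ∨ -σ = -1 := by rcases hσ with rfl | rfl <;> norm_num
      obtain ⟨hsg', habs'⟩ := tol_sign_helper (-σ) (θ (t + 1) - θs) hσ' (by nlinarith)
      have hst' : s (t + 1) = σ := by
        rw [hs (t + 1), if_pos (by rw [habs']; linarith [hin]), hsg']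
        ring
      have hflip : η (t + 1) = γ * η t := by
        rw [hηrec t, if_pos]
        rw [hst', hst]
        linear_combination (-1 : ℝ) * hσσ
      refine ⟨1, le_refl 1, by omega, Or.inr ⟨?_, ?_, hflip⟩⟩
      · rw [← habs']; exact hin
      · have : -σ * (θ (t + 1) - θs) = η t - σ * (θ t - θs) := by
          rw [neg_mul]; linarith [hy]
        rw [this]; linarith
    · exfalso
      have : θ (t + 1) - θs = 0 := by
        have := congrArg (fun z => σ * z) hzero
        simp only [mul_zero] at this
        nlinarith [hσσ]
      rw [this] at hin
      simp at hin
      linarith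
    · -- still on the same side: recurse
      obtain ⟨hsg', habs'⟩ := tol_sign_helper σ (θ (t + 1) - θs) hσ hpos
      have hd' : ε < σ * (θ (t + 1) - θs) := by rw [← habs']; exact hin
      have hst' : s (t + 1) = -σ := by
        rw [hs (t + 1), if_pos (by rw [habs']; exact hd'), hsg']
      have hsame : η (t + 1) = η t := by
        rw [hηrec t, if_neg]
        rw [hst', hst]
        intro hcon
        have : (1 : ℝ) = -1 := by linear_combination hcon - hσσ
        norm_num at this
      have hb' : σ * (θ (t + 1) - θs) - ε ≤ n * η (t + 1) := by
        rw [hsame, hy]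
        push_cast at hb ⊢
        linarith
      obtain ⟨k, hk1, hkn, hres⟩ := ih (t + 1) hd' hb' (by rw [hsame]; exact hη)
      rw [hsame] at hres
      have e : t + 1 + k = t + (k + 1) := by omega
      rw [e] at hres
      exact ⟨k + 1, by omega, by omega, hres⟩

/-- Outer induction over flips. -/
private lemma tol_outer (θs ε γ : ℝ) (θ η s : ℕ → ℝ)
    (hε : 0 < ε) (hγ0 : 0 < γ)
    (hs : ∀ τ, s τ = if ε < |θ τ - θs| then -Real.sign (θ τ - θs) else 0)
    (hθrec : ∀ τ, θ (τ + 1) = θ τ + s τ * η τ)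
    (hηrec : ∀ τ, η (τ + 1) = if s (τ + 1) * s τ = -1 then γ * η τ else η τ)
    (n : ℕ) (hn : γ⁻¹ ≤ (n : ℝ)) :
    ∀ (m t : ℕ) (σ : ℝ), (σ = 1 ∨ σ = -1) → ε < σ * (θ t - θs) →
      σ * (θ t - θs) - ε ≤ (n : ℝ) * η t → 0 < η t → γ ^ m * η t ≤ ε →
      ∃ k, k ≤ (m + 1) * n ∧ |θ (t + k) - θs| ≤ ε := by
  have hγn : (1 : ℝ) ≤ n * γ := by
    have h := mul_le_mul_of_nonneg_right hn hγ0.le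
    rwa [inv_mul_cancel₀ hγ0.ne'] at h
  intro m
  induction m with
  | zero =>
    intro t σ hσ hd hb hη hpow
    simp only [pow_zero, one_mul] at hpow
    obtain ⟨k, hk1, hkn, hres⟩ := tol_phase θs ε γ θ η s hε hs hθrec hηrec σ hσ n t hd hb hη
    rcases hres with h | ⟨h1, h2, _⟩
    · exact ⟨k, by omega, h⟩
    · exfalso; linarith
  | succ m ih =>
    intro t σ hσ hd hb hη hpow
    obtain ⟨k1, hk11, hk1n, hres⟩ := tol_phase θs ε γ θ η s hε hs hθrec hηrec σ hσ n t hd hb hη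
    rcases hres with h | ⟨h1, h2, h3⟩
    · exact ⟨k1, by nlinarith, h⟩
    · have hσ' : -σ = 1 ∨ -σ = -1 := by rcases hσ with rfl | rfl <;> norm_num
      have hb' : -σ * (θ (t + k1) - θs) - ε ≤ n * η (t + k1) := by
        rw [h3]
        nlinarith
      have hpow' : γ ^ m * η (t + k1) ≤ ε := by
        rw [h3]
        rw [pow_succ, mul_assoc] at hpow
        calc γ ^ m * (γ * η t) = γ ^ m * γ * η t := by ring
          _ ≤ ε := by rw [← mul_assoc] at hpow; exact hpow
      obtain ⟨k2, hk2, hent⟩ := ih (t + k1) (-σ) hσ' h1 hb' (by rw [h3]; positivity) hpow'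
      refine ⟨k1 + k2, ?_, ?_⟩
      · have : (m + 1 + 1) * n = n + (m + 1) * n := by ring
        omega
      · rwa [← add_assoc]

/-- The number of flips needed is bounded via logs. -/
private lemma tol_pow_log (ε η0 γ : ℝ) (hε : 0 < ε) (hη0 : 0 < η0)
    (hγ0 : 0 < γ) (hγ1 : γ < 1) (m : ℕ)
    (hm : max 0 ⌈Real.log (ε / η0) / Real.log γ⌉ ≤ (m : ℤ)) :
    γ ^ (m + 1) * η0 ≤ ε := by
  by_cases hcase : η0 ≤ ε
  · have h1 : γ ^ (m + 1) ≤ 1 := pow_le_one₀ hγ0.le hγ1.le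
    have h2 : (0 : ℝ) < γ ^ (m + 1) := by positivity
    nlinarith
  · push_neg at hcase
    have hlogγ : Real.log γ < 0 := Real.log_neg hγ0 hγ1
    have hrpos : (0 : ℝ) < ε / η0 := by positivity
    have hrm : Real.log (ε / η0) / Real.log γ ≤ (m : ℝ) := by
      have h1 : (⌈Real.log (ε / η0) / Real.log γ⌉ : ℝ) ≤ (m : ℝ) := by
        exact_mod_cast le_trans (le_max_right 0 _) hm
      exact le_trans (Int.le_ceil _) h1
    have key : ((m : ℝ) + 1) * Real.log γ ≤ Real.log (ε / η0) := by
      have h3 : Real.log (ε / η0) / Real.log γ * Real.log γ = Real.log (ε / η0) :=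
        div_mul_cancel₀ _ (ne_of_lt hlogγ)
      nlinarith [hrm, hlogγ]
    have hpow : γ ^ (m + 1) ≤ ε / η0 := by
      rw [← Real.log_le_log_iff (by positivity) hrpos, Real.log_pow]
      push_cast
      linarith
    calc γ ^ (m + 1) * η0 ≤ (ε / η0) * η0 := by nlinarith
      _ = ε := by field_simp

open Classical in
/-- Theorem 2, quantitative part: the scalar tolerance dynamics reach the
acceptance region within `⌈|θ₀-θ*|/η₀⌉ + ⌈γ⁻¹⌉·(1 + max(0, ⌈log(ε/η₀)/log γ⌉))` steps. -/
theorem finite_time_convergence_quantitative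
    (θs ε γ η0 θ0 : ℝ) (hε : 0 < ε) (hγ0 : 0 < γ) (hγ1 : γ < 1) (hη0 : 0 < η0)
    (θ η s : ℕ → ℝ)
    (hθinit : θ 0 = θ0) (hηinit : η 0 = η0)
    (hs : ∀ τ, s τ = if ε < |θ τ - θs| then -Real.sign (θ τ - θs) else 0)
    (hθrec : ∀ τ, θ (τ + 1) = θ τ + s τ * η τ)
    (hηrec : ∀ τ, η (τ + 1) = if s (τ + 1) * s τ = -1 then γ * η τ else η τ) :
    ∃ τstar : ℕ, |θ τstar - θs| ≤ ε ∧
      (∀ τ : ℕ, τstar ≤ τ → θ τ = θ τstar) ∧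
      (τstar : ℤ) ≤ ⌈|θ0 - θs| / η0⌉ +
        ⌈γ⁻¹⌉ * (1 + max 0 ⌈Real.log (ε / η0) / Real.log γ⌉) := by
  have hn1 : (1 : ℤ) ≤ ⌈γ⁻¹⌉ := Int.ceil_pos.mpr (by positivity)
  have hM0 : (0 : ℤ) ≤ max 0 ⌈Real.log (ε / η0) / Real.log γ⌉ := le_max_left _ _
  have hRHS2 : (0 : ℤ) ≤ ⌈γ⁻¹⌉ * (1 + max 0 ⌈Real.log (ε / η0) / Real.log γ⌉) := by
    apply mul_nonneg <;> linarith
  by_cases h0 : |θ 0 - θs| ≤ ε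
  · refine ⟨0, h0, ?_, ?_⟩
    · intro τ _
      have := tol_absorbed θs ε θ η s hs hθrec 0 h0 τ
      simpa using this
    · have hcn : (0 : ℤ) ≤ ⌈|θ0 - θs| / η0⌉ := Int.ceil_nonneg (by positivity)
      push_cast
      linarith
  · push_neg at h0
    -- step counts for the first phase and subsequent phases
    set n : ℕ := (⌈γ⁻¹⌉).toNat with hndef
    have hnn : ((n : ℤ)) = ⌈γ⁻¹⌉ := Int.toNat_of_nonneg (by linarith)
    have hnR : γ⁻¹ ≤ (n : ℝ) := by
      calc γ⁻¹ ≤ (⌈γ⁻¹⌉ : ℝ) := Int.le_ceil _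
        _ = (n : ℝ) := by exact_mod_cast hnn.symm
    set m : ℕ := (max 0 ⌈Real.log (ε / η0) / Real.log γ⌉).toNat with hmdef
    have hmm : ((m : ℤ)) = max 0 ⌈Real.log (ε / η0) / Real.log γ⌉ := Int.toNat_of_nonneg hM0
    have hd0pos : 0 < |θ0 - θs| / η0 := by
      apply div_pos _ hη0
      rw [← hθinit]
      linarith
    have hc1 : (1 : ℤ) ≤ ⌈|θ0 - θs| / η0⌉ := Int.ceil_pos.mpr hd0pos
    set n0 : ℕ := (⌈|θ0 - θs| / η0⌉).toNat with hn0def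
    have hn00 : ((n0 : ℤ)) = ⌈|θ0 - θs| / η0⌉ := Int.toNat_of_nonneg (by linarith)
    have hn0R : |θ0 - θs| / η0 ≤ (n0 : ℝ) := by
      calc |θ0 - θs| / η0 ≤ (⌈|θ0 - θs| / η0⌉ : ℝ) := Int.le_ceil _
        _ = (n0 : ℝ) := by exact_mod_cast hn00.symm
    have hn0abs : |θ 0 - θs| ≤ (n0 : ℝ) * η 0 := by
      rw [hθinit, hηinit]
      exact (div_le_iff₀ hη0).mp hn0R
    obtain ⟨σ, hσ, hd⟩ : ∃ σ : ℝ, (σ = 1 ∨ σ = -1) ∧ ε < σ * (θ 0 - θs) := by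
      rcases lt_or_ge 0 (θ 0 - θs) with h | h
      · exact ⟨1, Or.inl rfl, by rw [one_mul]; rwa [abs_of_pos h] at h0⟩
      · refine ⟨-1, Or.inr rfl, ?_⟩
        rw [abs_of_nonpos (by linarith)] at h0
        linarith
    have hη0pos : 0 < η 0 := by rw [hηinit]; exact hη0
    have hb0 : σ * (θ 0 - θs) - ε ≤ (n0 : ℝ) * η 0 := by
      have habs : σ * (θ 0 - θs) ≤ |θ 0 - θs| := by
        rcases hσ with rfl | rfl
        · rw [one_mul]; exact le_abs_self _
        · rw [neg_one_mul]; exact neg_le_abs _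
      linarith
    obtain ⟨k0, hk01, hk0n, hres⟩ :=
      tol_phase θs ε γ θ η s hε hs hθrec hηrec σ hσ n0 0 hd hb0 hη0pos
    simp only [Nat.zero_add] at hres
    rcases hres with hentry | ⟨h1, h2, h3⟩
    · refine ⟨k0, hentry, ?_, ?_⟩
      · intro τ hτ
        have := tol_absorbed θs ε θ η s hs hθrec k0 hentry (τ - k0)
        rwa [Nat.add_sub_cancel' hτ] at this
      · have : (k0 : ℤ) ≤ n0 := by exact_mod_cast hk0n
        omega
    · -- a flip happened at time k0
      have hσ' : -σ = 1 ∨ -σ = -1 := by rcases hσ with rfl | rfl <;> norm_num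
      have hpow : γ ^ m * η k0 ≤ ε := by
        rw [h3, hηinit]
        have hkey := tol_pow_log ε η0 γ hε hη0 hγ0 hγ1 m (by rw [hmm])
        calc γ ^ m * (γ * η0) = γ ^ (m + 1) * η0 := by ring
          _ ≤ ε := hkey
      have hγn : (1 : ℝ) ≤ n * γ := by
        have h := mul_le_mul_of_nonneg_right hnR hγ0.le
        rwa [inv_mul_cancel₀ hγ0.ne'] at h
      have hb' : -σ * (θ k0 - θs) - ε ≤ (n : ℝ) * η k0 := by
        rw [h3]
        nlinarith
      obtain ⟨k2, hk2, hent⟩ :=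
        tol_outer θs ε γ θ η s hε hγ0 hs hθrec hηrec n hnR m k0 (-σ) hσ' h1 hb'
          (by rw [h3]; positivity) hpow
      refine ⟨k0 + k2, hent, ?_, ?_⟩
      · intro τ hτ
        have := tol_absorbed θs ε θ η s hs hθrec (k0 + k2) hent (τ - (k0 + k2))
        rwa [Nat.add_sub_cancel' hτ] at this
      · have hA : (k0 : ℤ) ≤ n0 := by exact_mod_cast hk0n
        have hB : (k2 : ℤ) ≤ ((m : ℤ) + 1) * n := by exact_mod_cast hk2
        have hfin : ((m : ℤ) + 1) * n = ⌈γ⁻¹⌉ * (1 + max 0 ⌈Real.log (ε / η0) / Real.log γ⌉) := by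
          rw [hmm, hnn]; ring
        push_cast
        rw [hfin] at hB
        omega
end

section
/- (Corollary 1, logarithmic user-interaction complexity) Under the scalar tolerance dynamics, the number of iterations τ at which the user provides a nonzero prompt, i.e. the cardinality of {τ ∈ ℕ : s(τ) ≠ 0}, is finite and at most ⌈|θ₀ - θ*|/η₀⌉ + ⌈γ⁻¹⌉ · (1 + max(0, ⌈log(ε/η₀)/log γ⌉)); in particular it scales logarithmically in η₀/ε. -/
lemma tol_step_lemma (θs ε γ : ℝ) (θ η s : ℕ → ℝ) (hε : 0 < ε)
    (hs : ∀ τ, s τ = if ε < |θ τ - θs| then -Real.sign (θ τ - θs) else 0)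
    (hθrec : ∀ τ, θ (τ + 1) = θ τ + s τ * η τ)
    (hηrec : ∀ τ, η (τ + 1) = if s (τ + 1) * s τ = -1 then γ * η τ else η τ)
    (t : ℕ) (ht : ε < |θ t - θs|) :
    |θ (t+1) - θs| = |(|θ t - θs| - η t)| ∧
    η (t+1) = if ε < η t - |θ t - θs| then γ * η t else η t := by
  have hd0 : θ t - θs ≠ 0 := by
    intro h; rw [h] at ht; simp at ht; linarith
  rcases hd0.lt_or_gt with hneg | hpos
  · -- d < 0
    have habs : |θ t - θs| = -(θ t - θs) := abs_of_neg hneg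
    have hst : s t = 1 := by
      rw [hs t, if_pos ht, Real.sign_of_neg hneg]; norm_num
    have hθ1 : θ (t+1) - θs = (θ t - θs) + η t := by rw [hθrec t, hst]; ring
    have habs1 : |θ (t+1) - θs| = |(|θ t - θs| - η t)| := by
      rw [hθ1, habs, ← abs_neg]; ring_nf
    refine ⟨habs1, ?_⟩
    by_cases hO : ε < η t - |θ t - θs|
    · have hpos1 : 0 < θ (t+1) - θs := by rw [hθ1]; linarith [habs.symm.le]
      have h1' : ε < |θ (t+1) - θs| := by
        rw [abs_of_pos hpos1, hθ1]; linarith [abs_of_neg hneg]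
      have hst1 : s (t+1) = -1 := by
        rw [hs (t+1), if_pos h1', Real.sign_of_pos hpos1]
      rw [hηrec t, hst1, hst, if_pos (by norm_num), if_pos hO]
    · rw [if_neg hO, hηrec t, if_neg]
      rw [hs (t+1), hst]
      by_cases h1' : ε < |θ (t+1) - θs|
      · rw [if_pos h1']
        have hneg1 : θ (t+1) - θs < 0 := by
          rcases lt_trichotomy (θ (t+1) - θs) 0 with h|h|h
          · exact h
          · rw [h] at h1'; simp at h1'; linarith
          · exfalso
            have := abs_of_pos h
            rw [this, hθ1] at h1'
            rw [habs] at hO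
            push_neg at hO
            linarith
        rw [Real.sign_of_neg hneg1]; norm_num
      · rw [if_neg h1']; norm_num
  · -- d > 0
    have habs : |θ t - θs| = θ t - θs := abs_of_pos hpos
    have hst : s t = -1 := by
      rw [hs t, if_pos ht, Real.sign_of_pos hpos]
    have hθ1 : θ (t+1) - θs = (θ t - θs) - η t := by rw [hθrec t, hst]; ring
    have habs1 : |θ (t+1) - θs| = |(|θ t - θs| - η t)| := by rw [hθ1, habs]
    refine ⟨habs1, ?_⟩
    by_cases hO : ε < η t - |θ t - θs|
    · have hneg1 : θ (t+1) - θs < 0 := by rw [hθ1]; linarith [habs.symm.le, habs]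
      have h1' : ε < |θ (t+1) - θs| := by
        rw [abs_of_neg hneg1, hθ1]; linarith [abs_of_pos hpos]
      have hst1 : s (t+1) = 1 := by
        rw [hs (t+1), if_pos h1', Real.sign_of_neg hneg1]; norm_num
      rw [hηrec t, hst1, hst, if_pos (by norm_num), if_pos hO]
    · rw [if_neg hO, hηrec t, if_neg]
      rw [hs (t+1), hst]
      by_cases h1' : ε < |θ (t+1) - θs|
      · rw [if_pos h1']
        have hpos1 : 0 < θ (t+1) - θs := by
          rcases lt_trichotomy (θ (t+1) - θs) 0 with h|h|h
          · exfalso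
            have := abs_of_neg h
            rw [this, hθ1] at h1'
            rw [habs] at hO
            push_neg at hO
            linarith
          · rw [h] at h1'; simp at h1'; linarith
          · exact h
        rw [Real.sign_of_pos hpos1]; norm_num
      · rw [if_neg h1']; norm_num

lemma tol_cross_lemma (θs ε γ : ℝ) (θ η s : ℕ → ℝ) (hε : 0 < ε)
    (hs : ∀ τ, s τ = if ε < |θ τ - θs| then -Real.sign (θ τ - θs) else 0)
    (hθrec : ∀ τ, θ (τ + 1) = θ τ + s τ * η τ)
    (hηrec : ∀ τ, η (τ + 1) = if s (τ + 1) * s τ = -1 then γ * η τ else η τ)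
    (t : ℕ) (h1 : ε < |θ t - θs|) (hc : |θ t - θs| < η t) :
    s (t + 1) = 0 ∨
      (ε < |θ (t + 1) - θs| ∧ |θ (t + 1) - θs| + ε < η t ∧ η (t + 1) = γ * η t) := by
  obtain ⟨hu1, hη1⟩ := tol_step_lemma θs ε γ θ η s hε hs hθrec hηrec t h1
  have hu1' : |θ (t+1) - θs| = η t - |θ t - θs| := by
    rw [hu1, abs_of_neg (show |θ t - θs| - η t < 0 by linarith)]; ring
  by_cases h2 : ε < |θ (t+1) - θs|
  · right
    refine ⟨h2, by rw [hu1']; linarith, ?_⟩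
    rw [hη1, if_pos]
    rw [hu1'] at h2; linarith
  · left; rw [hs (t+1), if_neg h2]

lemma tol_phase_lemma (θs ε γ : ℝ) (θ η s : ℕ → ℝ) (hε : 0 < ε)
    (hs : ∀ τ, s τ = if ε < |θ τ - θs| then -Real.sign (θ τ - θs) else 0)
    (hθrec : ∀ τ, θ (τ + 1) = θ τ + s τ * η τ)
    (hηrec : ∀ τ, η (τ + 1) = if s (τ + 1) * s τ = -1 then γ * η τ else η τ) :
    ∀ (n t : ℕ), ε < |θ t - θs| → |θ t - θs| ≤ (n + 1 : ℝ) * η t →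
      ∃ m ≤ n + 1, s (t + m) = 0 ∨
        (ε < |θ (t + m) - θs| ∧ |θ (t + m) - θs| + ε < η t ∧ η (t + m) = γ * η t) := by
  intro n
  induction n with
  | zero =>
    intro t h1 h2
    by_cases hc : |θ t - θs| < η t
    · exact ⟨1, le_refl 1, tol_cross_lemma θs ε γ θ η s hε hs hθrec hηrec t h1 hc⟩
    · push_neg at hc
      have heq : |θ t - θs| = η t := le_antisymm (by push_cast at h2; linarith) hc
      obtain ⟨hu1, hη1⟩ := tol_step_lemma θs ε γ θ η s hε hs hθrec hηrec t h1
      have hz : |θ (t+1) - θs| = 0 := by rw [hu1, heq]; simp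
      exact ⟨1, le_refl 1, Or.inl (by rw [hs (t+1), if_neg (by rw [hz]; linarith)])⟩
  | succ n ih =>
    intro t h1 h2
    by_cases hc : |θ t - θs| < η t
    · exact ⟨1, by omega, tol_cross_lemma θs ε γ θ η s hε hs hθrec hηrec t h1 hc⟩
    · push_neg at hc
      obtain ⟨hu1, hη1⟩ := tol_step_lemma θs ε γ θ η s hε hs hθrec hηrec t h1
      have hu1' : |θ (t+1) - θs| = |θ t - θs| - η t := by
        rw [hu1, abs_of_nonneg (by linarith)]
      have hηsame : η (t+1) = η t := by
        rw [hη1, if_neg]; push_neg; linarith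
      by_cases h2' : ε < |θ (t+1) - θs|
      · have hb : |θ (t+1) - θs| ≤ (n + 1 : ℝ) * η (t+1) := by
          rw [hu1', hηsame]; push_cast at h2 ⊢; linarith
        obtain ⟨m, hm, hres⟩ := ih (t+1) h2' hb
        refine ⟨m + 1, by omega, ?_⟩
        rw [show t + (m+1) = t + 1 + m by omega]
        rwa [hηsame] at hres
      · exact ⟨1, by omega, Or.inl (by rw [hs (t+1), if_neg h2'])⟩

lemma tol_outer_lemma (θs ε γ η0 : ℝ) (θ η s : ℕ → ℝ)
    (hε : 0 < ε) (hγ0 : 0 < γ) (hγ1 : γ < 1) (hη0 : 0 < η0)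
    (hs : ∀ τ, s τ = if ε < |θ τ - θs| then -Real.sign (θ τ - θs) else 0)
    (hθrec : ∀ τ, θ (τ + 1) = θ τ + s τ * η τ)
    (hηrec : ∀ τ, η (τ + 1) = if s (τ + 1) * s τ = -1 then γ * η τ else η τ)
    (K C : ℕ) (hC : (1:ℝ)/γ ≤ C) (hK : γ ^ K * η0 ≤ ε) :
    ∀ (j t : ℕ), ε < |θ t - θs| → γ * |θ t - θs| < η t →
      η t ≤ γ ^ (K + 1 - j) * η0 →
      ∃ T ≤ t + j * C, s T = 0 := by
  intro j
  induction j with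
  | zero =>
    intro t h1 h2 h3
    exfalso
    have e1 : γ ^ (K + 1) * η0 ≤ γ * ε := by
      rw [pow_succ]
      nlinarith [hK]
    have e2 : γ * |θ t - θs| < γ * ε := lt_of_lt_of_le h2 (le_trans h3 e1)
    have e3 := (mul_lt_mul_iff_right₀ hγ0).mp e2
    linarith
  | succ j ih =>
    intro t h1 h2 h3
    have hC1 : 1 ≤ C := by
      have g1 : (1:ℝ) < 1/γ := by rw [lt_div_iff₀ hγ0]; linarith
      have g2 : (1:ℝ) < C := lt_of_lt_of_le g1 hC
      exact_mod_cast g2.le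
    have hu0 : 0 < |θ t - θs| := lt_trans hε h1
    have hηt : 0 < η t := lt_trans (mul_pos hγ0 hu0) h2
    have hb : |θ t - θs| ≤ ((C - 1 : ℕ) + 1 : ℝ) * η t := by
      have e0 : ((C - 1 : ℕ) + 1 : ℝ) = (C : ℝ) := by
        have : C - 1 + 1 = C := by omega
        exact_mod_cast congrArg (Nat.cast : ℕ → ℝ) this
      rw [e0]
      have e1 : |θ t - θs| < η t / γ := by
        rw [lt_div_iff₀ hγ0]; linarith [mul_comm γ (|θ t - θs|)]
      have e2 : η t / γ ≤ (C : ℝ) * η t := by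
        rw [div_eq_mul_inv, mul_comm]
        apply mul_le_mul_of_nonneg_right _ hηt.le
        rw [← one_div]; exact hC
      linarith
    obtain ⟨m, hm, hres⟩ := tol_phase_lemma θs ε γ θ η s hε hs hθrec hηrec (C - 1) t h1 hb
    have h4 : m ≤ C := by omega
    rcases hres with h0 | ⟨hu', hlt, hηm⟩
    · exact ⟨t + m, by have hmul : (j+1) * C = j * C + C := Nat.succ_mul j C; omega, h0⟩
    · have inv2 : γ * |θ (t + m) - θs| < η (t + m) := by
        rw [hηm]
        exact mul_lt_mul_of_pos_left (by linarith) hγ0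
      have inv3 : η (t + m) ≤ γ ^ (K + 1 - j) * η0 := by
        rw [hηm]
        have e1 : γ * η t ≤ γ * (γ ^ (K + 1 - (j + 1)) * η0) :=
          mul_le_mul_of_nonneg_left h3 hγ0.le
        have e2 : γ * (γ ^ (K + 1 - (j + 1)) * η0) = γ ^ (K + 1 - (j + 1) + 1) * η0 := by
          rw [pow_succ]; ring
        have e3 : γ ^ (K + 1 - (j + 1) + 1) * η0 ≤ γ ^ (K + 1 - j) * η0 := by
          apply mul_le_mul_of_nonneg_right _ hη0.le
          exact pow_le_pow_of_le_one hγ0.le hγ1.le (by omega)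
        linarith
      obtain ⟨T, hT, hTs⟩ := ih (t + m) hu' inv2 inv3
      exact ⟨T, by have hmul : (j+1) * C = j * C + C := Nat.succ_mul j C; omega, hTs⟩

open Classical in
theorem logarithmic_interaction_complexity'
    (θs ε γ η0 θ0 : ℝ) (hε : 0 < ε) (hγ0 : 0 < γ) (hγ1 : γ < 1) (hη0 : 0 < η0)
    (θ η s : ℕ → ℝ)
    (hθinit : θ 0 = θ0) (hηinit : η 0 = η0)
    (hs : ∀ τ, s τ = if ε < |θ τ - θs| then -Real.sign (θ τ - θs) else 0)
    (hθrec : ∀ τ, θ (τ + 1) = θ τ + s τ * η τ)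
    (hηrec : ∀ τ, η (τ + 1) = if s (τ + 1) * s τ = -1 then γ * η τ else η τ) :
    {τ : ℕ | s τ ≠ 0}.Finite ∧
    ({τ : ℕ | s τ ≠ 0}.ncard : ℤ) ≤ ⌈|θ0 - θs| / η0⌉ +
      ⌈γ⁻¹⌉ * (1 + max 0 ⌈Real.log (ε / η0) / Real.log γ⌉) := by
  -- abbreviations
  set L : ℝ := Real.log (ε / η0) / Real.log γ with hL
  set Kz : ℤ := max 0 ⌈L⌉ with hKzdef
  set Cz : ℤ := ⌈γ⁻¹⌉ with hCzdef
  set n0z : ℤ := ⌈|θ0 - θs| / η0⌉ with hn0zdef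
  set K : ℕ := Kz.toNat with hKdef
  set C : ℕ := Cz.toNat with hCdef
  have hKz0 : (0:ℤ) ≤ Kz := le_max_left _ _
  have hCz1 : (1:ℤ) ≤ Cz := by
    have : (0:ℝ) < γ⁻¹ := by positivity
    exact Int.ceil_pos.mpr this
  have hKcast : (K:ℤ) = Kz := Int.toNat_of_nonneg hKz0
  have hCcast : (C:ℤ) = Cz := Int.toNat_of_nonneg (by linarith)
  have hC : (1:ℝ)/γ ≤ C := by
    have e1 : γ⁻¹ ≤ (Cz:ℝ) := Int.le_ceil _
    have e2 : ((C:ℕ):ℝ) = ((Cz:ℤ):ℝ) := by exact_mod_cast congrArg (Int.cast : ℤ → ℝ) hCcast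
    rw [one_div, e2]; exact e1
  have hlogγ : Real.log γ < 0 := Real.log_neg hγ0 hγ1
  have hK : γ ^ K * η0 ≤ ε := by
    by_cases hcase : ε < η0
    · -- the log bound
      have hLK : L ≤ (K:ℝ) := by
        have e1 : (⌈L⌉:ℝ) ≤ ((Kz:ℤ):ℝ) := by exact_mod_cast le_max_right (0:ℤ) ⌈L⌉
        have e2 : ((K:ℕ):ℝ) = ((Kz:ℤ):ℝ) := by exact_mod_cast congrArg (Int.cast : ℤ → ℝ) hKcast
        rw [e2]; exact le_trans (Int.le_ceil L) e1
      have hexp : γ ^ K = Real.exp ((K:ℝ) * Real.log γ) := by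
        rw [Real.exp_nat_mul, Real.exp_log hγ0]
      have hmul : (K:ℝ) * Real.log γ ≤ L * Real.log γ :=
        mul_le_mul_of_nonpos_right hLK hlogγ.le
      have hLlog : L * Real.log γ = Real.log (ε / η0) := by
        rw [hL, div_mul_cancel₀ _ hlogγ.ne]
      have : γ ^ K ≤ ε / η0 := by
        rw [hexp]
        calc Real.exp ((K:ℝ) * Real.log γ) ≤ Real.exp (L * Real.log γ) :=
              Real.exp_le_exp.mpr hmul
          _ = ε / η0 := by rw [hLlog, Real.exp_log (by positivity)]
      calc γ ^ K * η0 ≤ (ε / η0) * η0 := mul_le_mul_of_nonneg_right this hη0.le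
        _ = ε := by field_simp
    · push_neg at hcase
      have : γ ^ K ≤ 1 := pow_le_one₀ hγ0.le hγ1.le
      nlinarith
  -- once s hits zero it stays zero
  have hstop : ∀ t, s t = 0 → ∀ m, s (t + m) = 0 := by
    intro t h0 m
    induction m with
    | zero => exact h0
    | succ m ih =>
      have hθeq : θ (t + m + 1) = θ (t + m) := by rw [hθrec, ih]; ring
      have : s (t + m + 1) = s (t + m) := by rw [hs (t + m + 1), hθeq, ← hs (t + m)]
      rw [show t + (m+1) = t + m + 1 by omega, this, ih]
  -- find the terminal time T
  have hmain : ∃ T : ℕ, s T = 0 ∧ (T:ℤ) ≤ n0z + Cz * (1 + Kz) := by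
    by_cases h0 : ε < |θ 0 - θs|
    · have hu0' : ε < |θ0 - θs| := by rwa [hθinit] at h0
      have hn0pos : (1:ℤ) ≤ n0z := by
        apply Int.ceil_pos.mpr
        exact div_pos (lt_trans hε hu0') hη0
      set n0 : ℕ := n0z.toNat with hn0def
      have hn0cast : (n0:ℤ) = n0z := Int.toNat_of_nonneg (by linarith)
      have hn0cast' : ((n0:ℕ):ℝ) = ((n0z:ℤ):ℝ) := by
        exact_mod_cast congrArg (Int.cast : ℤ → ℝ) hn0cast
      have hn01 : 1 ≤ n0 := by omega
      have hb : |θ 0 - θs| ≤ ((n0 - 1 : ℕ) + 1 : ℝ) * η 0 := by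
        have e0 : ((n0 - 1 : ℕ) + 1 : ℝ) = (n0 : ℝ) := by
          have : n0 - 1 + 1 = n0 := by omega
          exact_mod_cast congrArg (Nat.cast : ℕ → ℝ) this
        rw [e0, hθinit, hηinit]
        have e1 : |θ0 - θs| / η0 ≤ (n0:ℝ) := by
          rw [hn0cast']; exact Int.le_ceil _
        rw [div_le_iff₀ hη0] at e1
        exact e1
      obtain ⟨m, hm, hres⟩ :=
        tol_phase_lemma θs ε γ θ η s hε hs hθrec hηrec (n0 - 1) 0 h0 hb
      have hmn0 : m ≤ n0 := by omega
      rw [zero_add] at hres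
      rcases hres with hz | ⟨hu', hlt, hηm⟩
      · refine ⟨m, hz, ?_⟩
        have : (m:ℤ) ≤ (n0:ℤ) := by exact_mod_cast hmn0
        nlinarith
      · -- flip into phase 1, apply outer lemma
        rw [hηinit] at hlt hηm
        have inv2 : γ * |θ m - θs| < η m := by
          rw [hηm]; exact mul_lt_mul_of_pos_left (by linarith) hγ0
        have inv3 : η m ≤ γ ^ (K + 1 - K) * η0 := by
          have e : K + 1 - K = 1 := by omega
          rw [e, pow_one, hηm]
        obtain ⟨T, hT, hTs⟩ :=
          tol_outer_lemma θs ε γ η0 θ η s hε hγ0 hγ1 hη0 hs hθrec hηrec K C hC hK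
            K m hu' inv2 inv3
        refine ⟨T, hTs, ?_⟩
        have hTn : T ≤ n0 + K * C := by omega
        have : (T:ℤ) ≤ (n0:ℤ) + (K:ℤ) * (C:ℤ) := by exact_mod_cast hTn
        rw [hKcast, hCcast, hn0cast] at this
        nlinarith
    · refine ⟨0, by rw [hs 0, if_neg h0], ?_⟩
      have hn00 : (0:ℤ) ≤ n0z := Int.ceil_nonneg (by positivity)
      have hp : (0:ℤ) < Cz * (1 + Kz) := mul_pos (by linarith) (by linarith)
      push_cast
      linarith
  obtain ⟨T, hTs, hTb⟩ := hmain
  have hsub : {τ : ℕ | s τ ≠ 0} ⊆ ↑(Finset.range T) := by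
    intro τ hτ
    simp only [Set.mem_setOf_eq] at hτ
    simp only [Finset.coe_range, Set.mem_Iio]
    by_contra hge
    push_neg at hge
    exact hτ (by simpa [Nat.add_sub_cancel' hge] using hstop T hTs (τ - T))
  have hfin : {τ : ℕ | s τ ≠ 0}.Finite :=
    Set.Finite.subset (Finset.range T).finite_toSet hsub
  refine ⟨hfin, ?_⟩
  have hcard : {τ : ℕ | s τ ≠ 0}.ncard ≤ T := by
    have := Set.ncard_le_ncard hsub (Finset.range T).finite_toSet
    rwa [Set.ncard_coe_finset, Finset.card_range] at this
  have : ({τ : ℕ | s τ ≠ 0}.ncard : ℤ) ≤ (T:ℤ) := by exact_mod_cast hcard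
  linarith

open Classical in
/-- Corollary 1: the number of iterations with a nonzero user prompt is
finite and at most `⌈|θ₀-θ*|/η₀⌉ + ⌈γ⁻¹⌉·(1 + max(0, ⌈log(ε/η₀)/log γ⌉))`. -/
theorem logarithmic_interaction_complexity
    (θs ε γ η0 θ0 : ℝ) (hε : 0 < ε) (hγ0 : 0 < γ) (hγ1 : γ < 1) (hη0 : 0 < η0)
    (θ η s : ℕ → ℝ)
    (hθinit : θ 0 = θ0) (hηinit : η 0 = η0)
    (hs : ∀ τ, s τ = if ε < |θ τ - θs| then -Real.sign (θ τ - θs) else 0)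
    (hθrec : ∀ τ, θ (τ + 1) = θ τ + s τ * η τ)
    (hηrec : ∀ τ, η (τ + 1) = if s (τ + 1) * s τ = -1 then γ * η τ else η τ) :
    {τ : ℕ | s τ ≠ 0}.Finite ∧
    ({τ : ℕ | s τ ≠ 0}.ncard : ℤ) ≤ ⌈|θ0 - θs| / η0⌉ +
      ⌈γ⁻¹⌉ * (1 + max 0 ⌈Real.log (ε / η0) / Real.log γ⌉) := by
  exact logarithmic_interaction_complexity' θs ε γ η0 θ0 hε hγ0 hγ1 hη0 θ η s
    hθinit hηinit hs hθrec hηrec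
end

section
/- (Theorem 2, vector case) Fix q ≥ 1, θ* ∈ ℝ^q, componentwise positive tolerances ε ∈ ℝ^q and initial step sizes η₀ ∈ ℝ^q, γ ∈ (0,1), and θ₀ ∈ ℝ^q. Define sequences θ, η, s : ℕ → ℝ^q componentwise by θ_i(0) = θ₀_i, η_i(0) = η₀_i, s_i(τ) = -sgn(θ_i(τ) - θ*_i) if |θ_i(τ) - θ*_i| > ε_i and s_i(τ) = 0 otherwise, θ_i(τ+1) = θ_i(τ) + s_i(τ)·η_i(τ), and for τ ≥ 1, η_i(τ) = γ·η_i(τ-1) if s_i(τ)·s_i(τ-1) = -1 and η_i(τ) = η_i(τ-1) otherwise. Then there exists τ* with θ(τ*) in the acceptance box {θ ∈ ℝ^q : |θ_i - θ*_i| ≤ ε_i for all i}, θ(τ) = θ(τ*) for all τ ≥ τ*, and τ* ≤ max over i of (⌈|θ₀_i - θ*_i|/η₀_i⌉ + ⌈γ⁻¹⌉ · (1 + max(0, ⌈log(ε_i/η₀_i)/log γ⌉))). -/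
private noncomputable def PhiAux (θsv εv γ : ℝ) (θ η : ℕ → ℝ) (τ : ℕ) : ℤ :=
  ⌈|θ τ - θsv| / η τ⌉ + ⌈γ⁻¹⌉ * (1 + max 0 ⌈Real.log (εv / η τ) / Real.log γ⌉)

private lemma sign_step_facts (εv ηv d d' : ℝ) (hε : 0 < εv) (hη : 0 < ηv)
    (hd : εv < |d|) (hd' : εv < |d'|) (hstep : d' = d - Real.sign d * ηv) :
    (Real.sign d' * Real.sign d ≠ -1 ∧ ⌈|d'| / ηv⌉ = ⌈|d| / ηv⌉ - 1) ∨
    (Real.sign d' * Real.sign d = -1 ∧ εv < ηv ∧ |d'| ≤ ηv) := by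
  rcases lt_abs.mp hd with h1 | h1
  · have hsd : Real.sign d = 1 := Real.sign_of_pos (by linarith)
    rw [hsd, one_mul] at hstep
    rcases lt_abs.mp hd' with h2 | h2
    · have hsd' : Real.sign d' = 1 := Real.sign_of_pos (by linarith)
      left
      refine ⟨by rw [hsd, hsd']; norm_num, ?_⟩
      rw [abs_of_pos (by linarith : (0:ℝ) < d), abs_of_pos (by linarith : (0:ℝ) < d'),
        hstep, sub_div, div_self hη.ne']
      exact Int.ceil_sub_one _
    · have hsd' : Real.sign d' = -1 := Real.sign_of_neg (by linarith)
      right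
      have habs : |d'| = ηv - d := by
        rw [abs_of_neg (by linarith : d' < 0)]; rw [hstep]; ring
      refine ⟨by rw [hsd, hsd']; ring, by rw [habs] at hd'; linarith, by rw [habs]; linarith⟩
  · have hsd : Real.sign d = -1 := Real.sign_of_neg (by linarith)
    rw [hsd, neg_one_mul, sub_neg_eq_add] at hstep
    rcases lt_abs.mp hd' with h2 | h2
    · have hsd' : Real.sign d' = 1 := Real.sign_of_pos (by linarith)
      right
      have habs : |d'| = ηv + d := by
        rw [abs_of_pos (by linarith : (0:ℝ) < d')]; rw [hstep]; ring
      refine ⟨by rw [hsd, hsd']; ring, by rw [habs] at hd'; linarith, by rw [habs]; linarith⟩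
    · have hsd' : Real.sign d' = -1 := Real.sign_of_neg (by linarith)
      left
      refine ⟨by rw [hsd, hsd']; norm_num, ?_⟩
      rw [abs_of_neg (by linarith : d < 0), abs_of_neg (by linarith : d' < 0), hstep]
      have h3 : -(d + ηv) = -d - ηv := by ring
      rw [h3, sub_div, div_self hη.ne']
      exact Int.ceil_sub_one _

private lemma scalar_conv (θsv εv γ : ℝ) (hε : 0 < εv) (hγ0 : 0 < γ) (hγ1 : γ < 1)
    (θ η s : ℕ → ℝ) (hη0 : 0 < η 0)
    (hs : ∀ τ, s τ = if εv < |θ τ - θsv| then -Real.sign (θ τ - θsv) else 0)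
    (hθrec : ∀ τ, θ (τ + 1) = θ τ + s τ * η τ)
    (hηrec : ∀ τ, η (τ + 1) = if s (τ + 1) * s τ = -1 then γ * η τ else η τ) :
    ∃ N : ℕ, (N : ℤ) ≤ ⌈|θ 0 - θsv| / η 0⌉ +
        ⌈γ⁻¹⌉ * (1 + max 0 ⌈Real.log (εv / η 0) / Real.log γ⌉) ∧
      |θ N - θsv| ≤ εv := by
  have hηpos : ∀ τ, 0 < η τ := by
    intro τ
    induction τ with
    | zero => exact hη0
    | succ n ih =>
      rw [hηrec]
      split
      · exact mul_pos hγ0 ih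
      · exact ih
  have hceilinv : 1 ≤ ⌈γ⁻¹⌉ := Int.ceil_pos.mpr (inv_pos.mpr hγ0)
  have hlogγ : Real.log γ < 0 := Real.log_neg hγ0 hγ1
  have hsecond : ∀ τ, 1 ≤ ⌈γ⁻¹⌉ * (1 + max 0 ⌈Real.log (εv / η τ) / Real.log γ⌉) := by
    intro τ
    have h1 : (0:ℤ) ≤ max 0 ⌈Real.log (εv / η τ) / Real.log γ⌉ := le_max_left _ _
    nlinarith
  -- key decrease lemma
  have hkey : ∀ τ, εv < |θ τ - θsv| → εv < |θ (τ+1) - θsv| →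
      PhiAux θsv εv γ θ η (τ+1) + 1 ≤ PhiAux θsv εv γ θ η τ := by
    intro τ h1 h2
    have hsv : s τ = -Real.sign (θ τ - θsv) := by rw [hs]; rw [if_pos h1]
    have hsv' : s (τ+1) = -Real.sign (θ (τ+1) - θsv) := by rw [hs]; rw [if_pos h2]
    have hd' : θ (τ+1) - θsv = (θ τ - θsv) - Real.sign (θ τ - θsv) * η τ := by
      rw [hθrec, hsv]; ring
    have hprod : s (τ+1) * s τ = Real.sign (θ (τ+1) - θsv) * Real.sign (θ τ - θsv) := by
      rw [hsv, hsv', neg_mul_neg]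
    rcases sign_step_facts εv (η τ) _ _ hε (hηpos τ) h1 h2 hd' with ⟨hne, hceil⟩ | ⟨hflip, hεη, hbd⟩
    · have hηeq : η (τ+1) = η τ := by rw [hηrec, if_neg]; rw [hprod]; exact hne
      unfold PhiAux
      rw [hηeq, hceil]
      omega
    · have hηeq : η (τ+1) = γ * η τ := by rw [hηrec, if_pos]; rw [hprod]; exact hflip
      have hηv := hηpos τ
      have hfirst' : ⌈|θ (τ+1) - θsv| / (γ * η τ)⌉ ≤ ⌈γ⁻¹⌉ := by
        apply Int.ceil_le_ceil
        rw [div_le_iff₀ (by positivity)]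
        have : γ⁻¹ * (γ * η τ) = η τ := by field_simp
        rw [this]; exact hbd
      set M : ℤ := ⌈Real.log (εv / η τ) / Real.log γ⌉ with hMdef
      have hlogr : Real.log (εv / η τ) < 0 :=
        Real.log_neg (div_pos hε hηv) ((div_lt_one hηv).mpr hεη)
      have hM1 : 1 ≤ M := Int.ceil_pos.mpr (div_pos_of_neg_of_neg hlogr hlogγ)
      have hMrec : ⌈Real.log (εv / (γ * η τ)) / Real.log γ⌉ = M - 1 := by
        have he : εv / (γ * η τ) = (εv / η τ) / γ := by
          rw [div_div]; ring_nf
        rw [he, Real.log_div (div_pos hε hηv).ne' hγ0.ne', sub_div,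
          div_self hlogγ.ne]
        exact Int.ceil_sub_one _
      have hmax1 : max 0 M = M := max_eq_right (by linarith)
      have hmax2 : max 0 (M - 1) = M - 1 := max_eq_right (by linarith)
      have hfirst : 1 ≤ ⌈|θ τ - θsv| / η τ⌉ :=
        Int.ceil_pos.mpr (div_pos (lt_trans hε h1) hηv)
      unfold PhiAux
      rw [hηeq, hMrec, hmax2, ← hMdef, hmax1]
      have hr : ⌈γ⁻¹⌉ + ⌈γ⁻¹⌉ * (1 + (M - 1)) = ⌈γ⁻¹⌉ * (1 + M) := by ring
      linarith
  -- descent accumulation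
  have hdesc : ∀ k : ℕ, (∀ j, j ≤ k → εv < |θ j - θsv|) →
      PhiAux θsv εv γ θ η k + k ≤ PhiAux θsv εv γ θ η 0 := by
    intro k
    induction k with
    | zero => intro _; simp
    | succ n ih =>
      intro h
      have h1 := hkey n (h n (by omega)) (h (n+1) le_rfl)
      have h2 := ih (fun j hj => h j (by omega))
      push_cast
      push_cast at h2
      linarith
  by_contra hcon
  push_neg at hcon
  have hB0 : 0 ≤ PhiAux θsv εv γ θ η 0 := by
    have h1 : (0:ℤ) ≤ ⌈|θ 0 - θsv| / η 0⌉ := Int.ceil_nonneg (by positivity)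
    have h2 := hsecond 0
    unfold PhiAux
    linarith
  set T : ℕ := (PhiAux θsv εv γ θ η 0).toNat with hTdef
  have hT : (T : ℤ) = PhiAux θsv εv γ θ η 0 := Int.toNat_of_nonneg hB0
  have hall : ∀ j, j ≤ T → εv < |θ j - θsv| := by
    intro j hj
    apply hcon j
    have hjT : (j : ℤ) ≤ (T : ℤ) := by exact_mod_cast hj
    rw [hT] at hjT
    unfold PhiAux at hjT
    exact hjT
  have hfin := hdesc T hall
  rw [← hT] at hfin
  have hfirstT : 1 ≤ ⌈|θ T - θsv| / η T⌉ :=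
    Int.ceil_pos.mpr (div_pos (lt_trans hε (hall T le_rfl)) (hηpos T))
  have h2 := hsecond T
  unfold PhiAux at hfin
  linarith

open Classical in
/-- Theorem 2, vector case: the componentwise tolerance dynamics in `ℝ^q`
reach the acceptance box in finite time, bounded by the max over components of
`⌈|θ₀ᵢ-θ*ᵢ|/η₀ᵢ⌉ + ⌈γ⁻¹⌉·(1 + max(0, ⌈log(εᵢ/η₀ᵢ)/log γ⌉))`. -/
theorem finite_time_convergence_vector
    (q : ℕ) (hq : 1 ≤ q)
    (θs θ0 ε η0 : Fin q → ℝ) (γ : ℝ)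
    (hε : ∀ i, 0 < ε i) (hη0 : ∀ i, 0 < η0 i) (hγ0 : 0 < γ) (hγ1 : γ < 1)
    (θ η s : ℕ → Fin q → ℝ)
    (hθinit : θ 0 = θ0) (hηinit : η 0 = η0)
    (hs : ∀ τ i, s τ i = if ε i < |θ τ i - θs i| then -Real.sign (θ τ i - θs i) else 0)
    (hθrec : ∀ τ i, θ (τ + 1) i = θ τ i + s τ i * η τ i)
    (hηrec : ∀ τ i, η (τ + 1) i = if s (τ + 1) i * s τ i = -1 then γ * η τ i else η τ i) :
    ∃ τstar : ℕ, (∀ i, |θ τstar i - θs i| ≤ ε i) ∧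
      (∀ τ : ℕ, τstar ≤ τ → θ τ = θ τstar) ∧
      (τstar : ℤ) ≤ Finset.univ.sup' ⟨⟨0, hq⟩, Finset.mem_univ _⟩
        (fun i => ⌈|θ0 i - θs i| / η0 i⌉ +
          ⌈γ⁻¹⌉ * (1 + max 0 ⌈Real.log (ε i / η0 i) / Real.log γ⌉)) := by
  -- freezing: once a component is inside its tolerance band, it never moves again
  have freeze : ∀ i t, |θ t i - θs i| ≤ ε i → ∀ u, t ≤ u → θ u i = θ t i := by
    intro i t ht u hu
    induction u, hu using Nat.le_induction with
    | base => rfl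
    | succ n hn ih =>
      have hsz : s n i = 0 := by
        rw [hs, if_neg]
        rw [ih]
        exact not_lt.mpr ht
      rw [hθrec, hsz, zero_mul, add_zero, ih]
  -- apply the scalar lemma to each component
  have hsc : ∀ i : Fin q, ∃ N : ℕ, (N : ℤ) ≤ ⌈|θ0 i - θs i| / η0 i⌉ +
      ⌈γ⁻¹⌉ * (1 + max 0 ⌈Real.log (ε i / η0 i) / Real.log γ⌉) ∧
      |θ N i - θs i| ≤ ε i := by
    intro i
    have h := scalar_conv (θs i) (ε i) γ (hε i) hγ0 hγ1
      (fun τ => θ τ i) (fun τ => η τ i) (fun τ => s τ i)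
      (by simp only [hηinit]; exact hη0 i)
      (fun τ => hs τ i) (fun τ => hθrec τ i) (fun τ => hηrec τ i)
    simpa only [hθinit, hηinit] using h
  choose N hN1 hN2 using hsc
  set τstar : ℕ := Finset.univ.sup N with hτdef
  have hle : ∀ i, N i ≤ τstar := fun i => Finset.le_sup (Finset.mem_univ i)
  refine ⟨τstar, ?_, ?_, ?_⟩
  · intro i
    rw [freeze i (N i) (hN2 i) τstar (hle i)]
    exact hN2 i
  · intro τ hτ
    funext i
    rw [freeze i (N i) (hN2 i) τ (le_trans (hle i) hτ),
      freeze i (N i) (hN2 i) τstar (hle i)]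
  · obtain ⟨i0, -, hi0⟩ := Finset.exists_mem_eq_sup Finset.univ
      ⟨⟨0, hq⟩, Finset.mem_univ _⟩ N
    rw [hτdef, hi0]
    refine le_trans (hN1 i0) ?_
    apply Finset.le_sup' (fun i => ⌈|θ0 i - θs i| / η0 i⌉ +
      ⌈γ⁻¹⌉ * (1 + max 0 ⌈Real.log (ε i / η0 i) / Real.log γ⌉)) (Finset.mem_univ i0)
end
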